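/- arXiv:2106.01420 — 9 statements merged into one kernel-verified Lean document; each statement's English description precedes it below -/
import Mathlib

section
/- Let θ₁, …, θ_N be independent real-valued random variables on a probability space, let y ∈ ℝ, and let p = P(θ₁ > y); assume p > 0. Then for every index a ≠ 1, P({θ_j ≤ θ_a for all j ∈ {1,…,N}} ∩ {θ_a ≤ y}) ≤ ((1−p)/p) · P({θ_j < θ₁ for all j ≠ 1} ∩ {θ_a ≤ y}). (This is the core comparison underlying Lemma: the probability that a suboptimal arm a achieves the maximal sample while its sample is below the threshold y is at most (1−p)/p times the probability that arm 1 achieves the strictly maximal sample while θ_a is below y.) -/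
/-!
Let `F = {y < θ 0}` and `G = {θ a ≤ y, θ j ≤ θ a for all j ≠ 0}`. The event `G` is determined by
the variables `θ j`, `j ≠ 0`, hence independent of `F`. The left-hand event lies in `Fᶜ ∩ G`,
of probability `(1 - p) P(G)`, while `F ∩ G` lies in the right-hand event, so `p P(G)` is at most
the right-hand probability.
-/

open MeasureTheory ProbabilityTheory
open scoped ProbabilityTheory

namespace ProbabilityTheory

variable {Ω : Type*} {mΩ : MeasurableSpace Ω} {μ : Measure Ω}

lemma IndepSet.compl_left {s t : Set Ω} (h : IndepSet s t μ) : IndepSet sᶜ t μ :=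
  ((IndepSet_iff_Indep s t μ).1 h).indepSet_of_measurableSet
    (MeasurableSpace.measurableSet_generateFrom (Set.mem_singleton s)).compl
    (MeasurableSpace.measurableSet_generateFrom (Set.mem_singleton t))

lemma IndepSet.measureReal_inter_eq_mul {s t : Set Ω} (h : IndepSet s t μ) :
    μ.real (s ∩ t) = μ.real s * μ.real t := by
  simp only [measureReal_def, h.measure_inter_eq_mul, ENNReal.toReal_mul]

lemma IndepSet.measureReal_le_div_mul_of_subset [IsProbabilityMeasure μ] {F G A B : Set Ω}
    (h : IndepSet F G μ) (hF : MeasurableSet F) (hF0 : 0 < μ.real F)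
    (hA : A ⊆ Fᶜ ∩ G) (hB : F ∩ G ⊆ B) :
    μ.real A ≤ (1 - μ.real F) / μ.real F * μ.real B := by
  have hA_le : μ.real A ≤ (1 - μ.real F) * μ.real G := by
    calc μ.real A ≤ μ.real (Fᶜ ∩ G) := measureReal_mono hA
      _ = (1 - μ.real F) * μ.real G := by
        rw [h.compl_left.measureReal_inter_eq_mul, probReal_compl_eq_one_sub hF]
  have hB_ge : μ.real F * μ.real G ≤ μ.real B := by
    rw [← h.measureReal_inter_eq_mul]
    exact measureReal_mono hB
  have hF1 : 0 ≤ 1 - μ.real F := sub_nonneg.2 measureReal_le_one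
  rw [div_mul_eq_mul_div, le_div_iff₀ hF0]
  calc μ.real A * μ.real F ≤ (1 - μ.real F) * μ.real G * μ.real F := by gcongr
    _ = (1 - μ.real F) * (μ.real F * μ.real G) := by ring
    _ ≤ (1 - μ.real F) * μ.real B := by gcongr

lemma measurable_of_mem_iSup_comap {ι β : Type*} [mβ : MeasurableSpace β] {f : ι → Ω → β}
    {S : Set ι} {i : ι} (hi : i ∈ S) :
    Measurable[⨆ j ∈ S, mβ.comap (f j)] (f i) :=
  measurable_iff_comap_le.2 (le_iSup₂ (f := fun j (_ : j ∈ S) => mβ.comap (f j)) i hi)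

lemma iIndepFun.indepSet_of_measurableSet_iSup_comap {ι β : Type*} [mβ : MeasurableSpace β]
    {f : ι → Ω → β} (h : iIndepFun f μ) (hf : ∀ i, Measurable (f i)) {S T : Set ι}
    (hST : Disjoint S T) {s t : Set Ω} (hs : MeasurableSet[⨆ i ∈ S, mβ.comap (f i)] s)
    (ht : MeasurableSet[⨆ i ∈ T, mβ.comap (f i)] t) : IndepSet s t μ :=
  (indep_iSup_of_disjoint (fun i => (hf i).comap_le) ((iIndepFun_iff_iIndep _ f μ).1 h)
    hST).indepSet_of_measurableSet hs ht

end ProbabilityTheory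

/-- For independent real random variables `θ 0, …, θ (N-1)` (index `0` plays the role of the
optimal arm `1`), threshold `y`, and `p = P(θ 0 > y) > 0`: for every arm `a ≠ 0`,
the probability that `θ a` is maximal and at most `y` is bounded by `(1-p)/p` times the
probability that `θ 0` is strictly maximal while `θ a ≤ y`. -/
theorem prob_suboptimal_max_le {Ω : Type*} [MeasureSpace Ω]
    [IsProbabilityMeasure (ℙ : Measure Ω)] {N : ℕ}
    (θ : Fin N → Ω → ℝ) (hmeas : ∀ i, Measurable (θ i))
    (hindep : ProbabilityTheory.iIndepFun θ ℙ)
    [NeZero N]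
    (y : ℝ) (p : ℝ) (hp : p = (ℙ {ω | y < θ 0 ω}).toReal) (hp0 : 0 < p)
    (a : Fin N) (ha : a ≠ 0) :
    (ℙ {ω | (∀ j, θ j ω ≤ θ a ω) ∧ θ a ω ≤ y}).toReal ≤
      (1 - p) / p * (ℙ {ω | (∀ j, j ≠ 0 → θ j ω < θ 0 ω) ∧ θ a ω ≤ y}).toReal := by
  subst hp
  have hF : MeasurableSet[⨆ i ∈ ({0} : Set (Fin N)), MeasurableSpace.comap (θ i) inferInstance]
      {ω | y < θ 0 ω} :=
    measurableSet_lt measurable_const (measurable_of_mem_iSup_comap rfl)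
  have hG : MeasurableSet[⨆ i ∈ ({0}ᶜ : Set (Fin N)), MeasurableSpace.comap (θ i) inferInstance]
      {ω | (∀ j, j ≠ 0 → θ j ω ≤ θ a ω) ∧ θ a ω ≤ y} := by
    have hθa := measurable_of_mem_iSup_comap (f := θ) (Set.mem_compl_singleton_iff.2 ha)
    simp only [Set.ofPred_and, Set.ofPred_forall]
    exact (MeasurableSet.iInter fun (j : Fin N) => MeasurableSet.iInter fun (hj : j ≠ 0) =>
      measurableSet_le (measurable_of_mem_iSup_comap hj) hθa).inter
      (measurableSet_le hθa measurable_const)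
  refine (hindep.indepSet_of_measurableSet_iSup_comap hmeas disjoint_compl_right hF hG
    ).measureReal_le_div_mul_of_subset (measurableSet_lt measurable_const (hmeas 0)) hp0 ?_ ?_
  · rintro ω ⟨hmax, hay⟩
    exact ⟨not_lt.2 ((hmax 0).trans hay), fun j _ => hmax j, hay⟩
  · rintro ω ⟨hy0, hmax, hay⟩
    exact ⟨fun j hj => ((hmax j hj).trans hay).trans_lt hy0, hay⟩
end

section
/- Let n be a positive integer, let y ∈ (0,1), and let X be a Binomial(n, y) random variable. Then for every x with 0 < x < y, P(X ≤ n·x) ≤ exp(−n·d(x, y)), where d(x, y) = x·ln(x/y) + (1−x)·ln((1−x)/(1−y)). -/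
/-!
Chernoff's method: for `0 < L ≤ 1` the indicator of `k ≤ n x` is at most `L ^ (k - n x)`,
and summing against the binomial weights gives `(y L + 1 - y) ^ n · L ^ (-n x)` by the binomial
theorem. The minimising tilt `L = (x / y) / ((1 - x) / (1 - y))` lies in `(0, 1]` because
`x < y`, and at it the bound equals `exp (-n d(x, y))`.
-/

open Real Finset

noncomputable def bernoulliKL (x y : ℝ) : ℝ :=
  x * log (x / y) + (1 - x) * log ((1 - x) / (1 - y))

lemma ite_le_mul_rpow_sub {p L k a : ℝ} (hp : 0 ≤ p) (hL0 : 0 < L) (hL1 : L ≤ 1) :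
    (if k ≤ a then p else 0) ≤ p * L ^ (k - a) := by
  split_ifs with h
  · exact le_mul_of_one_le_right hp
      (one_le_rpow_of_pos_of_le_one_of_nonpos hL0 hL1 (by linarith))
  · positivity

lemma sum_binomial_mul_pow (n : ℕ) (y L : ℝ) :
    ∑ k ∈ range (n + 1), (n.choose k : ℝ) * y ^ k * (1 - y) ^ (n - k) * L ^ k
      = (y * L + (1 - y)) ^ n := by
  rw [add_pow]
  refine sum_congr rfl fun k _ => ?_
  rw [mul_pow]
  ring

theorem binomial_lower_tail_le_of_tilt (n : ℕ) {y : ℝ} (hy0 : 0 ≤ y) (hy1 : y ≤ 1) (a : ℝ)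
    {L : ℝ} (hL0 : 0 < L) (hL1 : L ≤ 1) :
    ∑ k ∈ range (n + 1),
        (if (k : ℝ) ≤ a then (n.choose k : ℝ) * y ^ k * (1 - y) ^ (n - k) else 0)
      ≤ (y * L + (1 - y)) ^ n * L ^ (-a) := by
  have h1y : 0 ≤ 1 - y := sub_nonneg.2 hy1
  calc _ ≤ ∑ k ∈ range (n + 1),
          (n.choose k : ℝ) * y ^ k * (1 - y) ^ (n - k) * L ^ ((k : ℝ) - a) :=
        sum_le_sum fun k _ => ite_le_mul_rpow_sub (by positivity) hL0 hL1
    _ = _ := by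
        rw [← sum_binomial_mul_pow, sum_mul]
        refine sum_congr rfl fun k _ => ?_
        rw [rpow_sub hL0, rpow_neg hL0.le, rpow_natCast]
        field_simp

lemma optimal_tilt_le_one {x y : ℝ} (hx0 : 0 < x) (hxy : x < y) (hy1 : y < 1) :
    (x / y) / ((1 - x) / (1 - y)) ≤ 1 := by
  have hy0 : 0 < y := hx0.trans hxy
  have h1y : 0 < 1 - y := by linarith
  calc (x / y) / ((1 - x) / (1 - y)) ≤ 1 / 1 := by
        gcongr
        · exact (div_le_one hy0).2 hxy.le
        · exact (one_le_div h1y).2 (by linarith)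
    _ = 1 := one_div_one

lemma mul_optimal_tilt_add {x y : ℝ} (hx1 : x < 1) (hy0 : 0 < y) (hy1 : y < 1) :
    y * ((x / y) / ((1 - x) / (1 - y))) + (1 - y) = (1 - y) / (1 - x) := by
  have h1x : 1 - x ≠ 0 := by linarith
  have h1y : 1 - y ≠ 0 := by linarith
  field_simp
  ring

lemma pow_mul_optimal_tilt_rpow (n : ℕ) {x y : ℝ} (hx0 : 0 < x) (hx1 : x < 1)
    (hy0 : 0 < y) (hy1 : y < 1) :
    ((1 - y) / (1 - x)) ^ n * ((x / y) / ((1 - x) / (1 - y))) ^ (-(n : ℝ) * x)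
      = exp (-(n : ℝ) * bernoulliKL x y) := by
  have h1x : 0 < 1 - x := by linarith
  have h1y : 0 < 1 - y := by linarith
  rw [← rpow_natCast, rpow_def_of_pos (by positivity), rpow_def_of_pos (by positivity),
    ← exp_add, bernoulliKL, log_div (div_pos hx0 hy0).ne' (div_pos h1x h1y).ne',
    log_div h1y.ne' h1x.ne', log_div h1x.ne' h1y.ne']
  congr 1
  ring

theorem binomial_lower_tail_chernoff_general (n : ℕ) (y : ℝ)
    (hy : y ∈ Set.Ioo (0:ℝ) 1) (x : ℝ) (hx : 0 < x) (hxy : x < y) :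
    (∑ k ∈ Finset.range (n + 1),
        if (k : ℝ) ≤ (n : ℝ) * x then (n.choose k : ℝ) * y ^ k * (1 - y) ^ (n - k) else 0)
      ≤ Real.exp (-(n : ℝ) *
          (x * Real.log (x / y) + (1 - x) * Real.log ((1 - x) / (1 - y)))) := by
  obtain ⟨hy0, hy1⟩ := hy
  have hx1 : x < 1 := hxy.trans hy1
  have hL0 : 0 < (x / y) / ((1 - x) / (1 - y)) := by
    have : 0 < 1 - x := by linarith
    have : 0 < 1 - y := by linarith
    positivity
  calc _ ≤ _ := binomial_lower_tail_le_of_tilt n hy0.le hy1.le _ hL0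
          (optimal_tilt_le_one hx hxy hy1)
    _ = _ := by
        rw [mul_optimal_tilt_add hx1 hy0 hy1, ← neg_mul,
          pow_mul_optimal_tilt_rpow n hx hx1 hy0 hy1, bernoulliKL]

/-- Chernoff–Hoeffding lower-tail bound for a Binomial(n, y) random variable `X`:
for `0 < x < y`, `P(X ≤ n·x) ≤ exp(−n·d(x,y))` where
`d(x,y) = x·ln(x/y) + (1−x)·ln((1−x)/(1−y))`. -/
theorem binomial_lower_tail_chernoff (n : ℕ) (hn : 0 < n) (y : ℝ)
    (hy : y ∈ Set.Ioo (0:ℝ) 1) (x : ℝ) (hx : 0 < x) (hxy : x < y) :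
    (∑ k ∈ Finset.range (n + 1),
        if (k : ℝ) ≤ (n : ℝ) * x then (n.choose k : ℝ) * y ^ k * (1 - y) ^ (n - k) else 0)
      ≤ Real.exp (-(n : ℝ) *
          (x * Real.log (x / y) + (1 - x) * Real.log ((1 - x) / (1 - y)))) :=
  binomial_lower_tail_chernoff_general n y hy x hx hxy
end

section
/- Let k > 0 be a real number and let 0 < u ≤ x < 1. Then the Beta(x·k + 1, (1−x)·k) distribution stochastically dominates the Beta(u·k + 1, (1−u)·k) distribution: for every y ∈ [0,1], F^{beta}_{x·k+1, (1−x)·k}(y) ≤ F^{beta}_{u·k+1, (1−u)·k}(y), where F^{beta}_{α,β} denotes the CDF of the Beta(α, β) distribution. -/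
/-- CDF of the Beta distribution with real parameters `α, β > 0`:
the density on `[0,1]` is proportional to `t^(α−1) * (1−t)^(β−1)` (real exponents). -/
noncomputable def betaCDF (α β y : ℝ) : ℝ :=
  (∫ t in (0:ℝ)..y, t ^ (α - 1) * (1 - t) ^ (β - 1)) /
    (∫ t in (0:ℝ)..1, t ^ (α - 1) * (1 - t) ^ (β - 1))

/-!
Monotone likelihood ratio implies stochastic dominance. The densities `f` of `Beta(α₂, β₂)` and
`g` of `Beta(α₁, β₁)` have ratio `f / g ∝ t^(α₂-α₁) (1-t)^(β₂-β₁)`, nondecreasing on `(0,1)` when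
`α₁ ≤ α₂` and `β₂ ≤ β₁`; so `f s * g t ≤ g s * f t` for `s ≤ t`. Integrating over `s < y < t`
gives `F(y) (1 - G(y)) ≤ G(y) (1 - F(y))` for the CDFs, i.e. `F(y) ≤ G(y)`. Here `α = u k + 1`
increases and `β = (1 - u) k` decreases with `u`.
-/

open MeasureTheory intervalIntegral Set

section LikelihoodRatio

variable {f g : ℝ → ℝ} {a y b : ℝ}

theorem integral_mul_integral_le_of_ratio_mono (hay : a ≤ y) (hyb : y ≤ b)
    (hf : IntervalIntegrable f volume a b) (hg : IntervalIntegrable g volume a b)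
    (hfg : ∀ s t, a < s → s ≤ t → t < b → f s * g t ≤ g s * f t) :
    (∫ s in a..y, f s) * (∫ t in y..b, g t) ≤ (∫ s in a..y, g s) * (∫ t in y..b, f t) := by
  have hy : y ∈ uIcc a b := mem_uIcc_of_le hay hyb
  have hfl := hf.mono_set (uIcc_subset_uIcc_left hy)
  have hgl := hg.mono_set (uIcc_subset_uIcc_left hy)
  have hfr := hf.mono_set (uIcc_subset_uIcc_right hy)
  have hgr := hg.mono_set (uIcc_subset_uIcc_right hy)
  have inner : ∀ s ∈ Ioo a y, f s * ∫ t in y..b, g t ≤ g s * ∫ t in y..b, f t := by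
    intro s hs
    rw [← intervalIntegral.integral_const_mul, ← intervalIntegral.integral_const_mul]
    exact integral_mono_on_of_le_Ioo hyb (hgr.const_mul _) (hfr.const_mul _)
      fun t ht => hfg s t hs.1 (hs.2.trans ht.1).le ht.2
  rw [← intervalIntegral.integral_mul_const, ← intervalIntegral.integral_mul_const]
  exact integral_mono_on_of_le_Ioo hay (hfl.mul_const _) (hgl.mul_const _) inner

theorem integral_div_integral_le_of_ratio_mono (hay : a ≤ y) (hyb : y ≤ b)
    (hf : IntervalIntegrable f volume a b) (hg : IntervalIntegrable g volume a b)
    (hf₀ : 0 < ∫ t in a..b, f t) (hg₀ : 0 < ∫ t in a..b, g t)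
    (hfg : ∀ s t, a < s → s ≤ t → t < b → f s * g t ≤ g s * f t) :
    (∫ t in a..y, f t) / (∫ t in a..b, f t) ≤ (∫ t in a..y, g t) / (∫ t in a..b, g t) := by
  have hy : y ∈ uIcc a b := mem_uIcc_of_le hay hyb
  rw [div_le_div_iff₀ hf₀ hg₀,
    ← integral_add_adjacent_intervals (hf.mono_set (uIcc_subset_uIcc_left hy))
      (hf.mono_set (uIcc_subset_uIcc_right hy)),
    ← integral_add_adjacent_intervals (hg.mono_set (uIcc_subset_uIcc_left hy))
      (hg.mono_set (uIcc_subset_uIcc_right hy))]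
  linarith [integral_mul_integral_le_of_ratio_mono hay hyb hf hg hfg]

end LikelihoodRatio

noncomputable def betaIntegrand (α β t : ℝ) : ℝ := t ^ (α - 1) * (1 - t) ^ (β - 1)

theorem betaCDF_eq (α β y : ℝ) :
    betaCDF α β y = (∫ t in (0:ℝ)..y, betaIntegrand α β t) / ∫ t in (0:ℝ)..1, betaIntegrand α β t :=
  rfl

section BetaIntegrand

variable {α β α₁ β₁ α₂ β₂ s t : ℝ}

theorem intervalIntegrable_betaIntegrand (hα : 0 < α) (hβ : 0 < β) :
    IntervalIntegrable (betaIntegrand α β) volume 0 1 := by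
  have left : IntervalIntegrable (betaIntegrand α β) volume 0 (1 / 2) := by
    refine (intervalIntegrable_rpow' (by linarith)).mul_continuousOn ?_
    refine ContinuousOn.rpow_const (by fun_prop) fun t ht => Or.inl ?_
    rw [uIcc_of_le (by norm_num)] at ht
    linarith [ht.2]
  have right : IntervalIntegrable (betaIntegrand α β) volume (1 / 2) 1 := by
    have hβ' : IntervalIntegrable (fun t : ℝ => (1 - t) ^ (β - 1)) volume (1 / 2) 1 := by
      convert ((intervalIntegrable_rpow' (r := β - 1) (by linarith) (a := 0)
        (b := 1 / 2)).comp_sub_left 1).symm using 1 <;> norm_num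
    refine hβ'.continuousOn_mul ?_
    refine ContinuousOn.rpow_const (by fun_prop) fun t ht => Or.inl ?_
    rw [uIcc_of_le (by norm_num)] at ht
    linarith [ht.1]
  exact left.trans right

theorem integral_betaIntegrand_pos (hα : 0 < α) (hβ : 0 < β) :
    0 < ∫ t in (0:ℝ)..1, betaIntegrand α β t := by
  refine intervalIntegral_pos_of_pos_on (intervalIntegrable_betaIntegrand hα hβ) ?_ one_pos
  intro t ⟨ht₀, ht₁⟩
  have : 0 < 1 - t := sub_pos.2 ht₁
  unfold betaIntegrand
  positivity

theorem betaIntegrand_eq_mul (ht₀ : 0 < t) (ht₁ : t < 1) :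
    betaIntegrand α₂ β₂ t =
      betaIntegrand α₁ β₁ t * (t ^ (α₂ - α₁) * (1 - t) ^ (β₂ - β₁)) := by
  unfold betaIntegrand
  rw [show α₂ - 1 = (α₁ - 1) + (α₂ - α₁) by ring, show β₂ - 1 = (β₁ - 1) + (β₂ - β₁) by ring,
    Real.rpow_add ht₀, Real.rpow_add (sub_pos.2 ht₁)]
  ring

theorem betaIntegrand_mul_betaIntegrand_le (hα : α₁ ≤ α₂) (hβ : β₂ ≤ β₁)
    (hs : 0 < s) (hst : s ≤ t) (ht : t < 1) :
    betaIntegrand α₂ β₂ s * betaIntegrand α₁ β₁ t ≤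
      betaIntegrand α₁ β₁ s * betaIntegrand α₂ β₂ t := by
  have ht₀ : 0 < t := hs.trans_le hst
  have ratio_mono : s ^ (α₂ - α₁) * (1 - s) ^ (β₂ - β₁) ≤ t ^ (α₂ - α₁) * (1 - t) ^ (β₂ - β₁) :=
    mul_le_mul (Real.rpow_le_rpow hs.le hst (sub_nonneg.2 hα))
      (Real.rpow_le_rpow_of_nonpos (sub_pos.2 ht) (by linarith) (sub_nonpos.2 hβ))
      (Real.rpow_nonneg (by linarith) _) (Real.rpow_nonneg ht₀.le _)
  have hpos : 0 ≤ betaIntegrand α₁ β₁ s * betaIntegrand α₁ β₁ t := by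
    have : 0 < 1 - s := by linarith
    have : 0 < 1 - t := by linarith
    unfold betaIntegrand
    positivity
  calc betaIntegrand α₂ β₂ s * betaIntegrand α₁ β₁ t
      = betaIntegrand α₁ β₁ s * betaIntegrand α₁ β₁ t *
          (s ^ (α₂ - α₁) * (1 - s) ^ (β₂ - β₁)) := by
        rw [betaIntegrand_eq_mul hs (hst.trans_lt ht)]; ring
    _ ≤ betaIntegrand α₁ β₁ s * betaIntegrand α₁ β₁ t *
          (t ^ (α₂ - α₁) * (1 - t) ^ (β₂ - β₁)) := mul_le_mul_of_nonneg_left ratio_mono hpos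
    _ = betaIntegrand α₁ β₁ s * betaIntegrand α₂ β₂ t := by
        rw [betaIntegrand_eq_mul (α₂ := α₂) ht₀ ht]; ring

end BetaIntegrand

theorem betaCDF_le_betaCDF {α₁ β₁ α₂ β₂ y : ℝ} (hα₁ : 0 < α₁) (hβ₂ : 0 < β₂)
    (hα : α₁ ≤ α₂) (hβ : β₂ ≤ β₁) (hy : y ∈ Icc (0:ℝ) 1) :
    betaCDF α₂ β₂ y ≤ betaCDF α₁ β₁ y := by
  have hα₂ : 0 < α₂ := hα₁.trans_le hα
  have hβ₁ : 0 < β₁ := hβ₂.trans_le hβ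
  rw [betaCDF_eq, betaCDF_eq]
  exact integral_div_integral_le_of_ratio_mono hy.1 hy.2
    (intervalIntegrable_betaIntegrand hα₂ hβ₂) (intervalIntegrable_betaIntegrand hα₁ hβ₁)
    (integral_betaIntegrand_pos hα₂ hβ₂) (integral_betaIntegrand_pos hα₁ hβ₁)
    fun s t hs hst ht => betaIntegrand_mul_betaIntegrand_le hα hβ hs hst ht

/-- For `k > 0` and `0 < u ≤ x < 1`, the distribution `Beta(x·k+1, (1−x)·k)` stochastically
dominates `Beta(u·k+1, (1−u)·k)`: its CDF is pointwise at most the CDF of the latter on `[0,1]`. -/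
theorem beta_stochastic_dominance (k : ℝ) (hk : 0 < k) (u x : ℝ)
    (hu : 0 < u) (hux : u ≤ x) (hx : x < 1) (y : ℝ) (hy : y ∈ Set.Icc (0:ℝ) 1) :
    betaCDF (x * k + 1) ((1 - x) * k) y ≤ betaCDF (u * k + 1) ((1 - u) * k) y := by
  have hxuk : u * k ≤ x * k := mul_le_mul_of_nonneg_right hux hk.le
  exact betaCDF_le_betaCDF (by positivity) (mul_pos (sub_pos.2 hx) hk) (by linarith)
    (by linarith) hy
end

section
/- Let X₁, X₂, … be independent standard Gaussian random variables (mean zero, variance 1), and let β̂_s = (1/s)·Σ_{i=1}^{s} X_i. Let T ≥ N ≥ 1 be integers and let 𝔅 = {2^i : i = 0, 1, …, ⌊log₂ T⌋}. Then for every α > 2 and every Δ > 0, P( ∃ s ∈ 𝔅 : β̂_s + √((α/s)·log⁺(T/(s·N))) + Δ ≤ 0 ) ≤ 4N/(T·Δ²). -/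
/-!
Union bound over the scales `s = 2 ^ i`. The sum of `s` independent standard Gaussians is
sub-Gaussian with variance proxy `s`, so Hoeffding bounds the probability at scale `s` by
`exp (-s (R + Δ) ^ 2 / 2) ≤ exp (-(α / 2) log⁺ (T / (s N))) * exp (-s Δ ^ 2 / 2)`, where
`R ^ 2 = (α / s) log⁺ (T / (s N))`; as `α ≥ 2` the first factor is at most `s N / T`. Finally
`∑ 2 ^ i exp (-2 ^ i c) ≤ 2 / c` for `c = Δ ^ 2 / 2`, because the sum telescopes against
`u exp (-2u) ≤ exp (-u) - exp (-2u)`.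
-/

open MeasureTheory ProbabilityTheory
open scoped ProbabilityTheory BigOperators

noncomputable def posLog (x : ℝ) : ℝ := max (Real.log x) 0

open Finset
open Real (exp)

namespace ProbabilityTheory.HasSubgaussianMGF

variable {Ω : Type*} {mΩ : MeasurableSpace Ω} {μ : Measure Ω}

lemma of_map_eq_gaussianReal {X : Ω → ℝ} {v : NNReal} (hX : μ.map X = gaussianReal 0 v) :
    HasSubgaussianMGF X v μ := by
  have hXm : AEMeasurable X μ := aemeasurable_of_map_neZero (by rw [hX]; infer_instance)
  refine (id_map_iff hXm).1 ?_
  rw [hX]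
  exact ⟨integrable_exp_mul_gaussianReal, fun t ↦ by simp [mgf_id_gaussianReal]⟩

lemma measureReal_sum_le_neg_le_of_iIndepFun {ι : Type*} {X : ι → Ω → ℝ}
    (h_indep : iIndepFun X μ) {c : ι → NNReal} {s : Finset ι}
    (h_subG : ∀ i ∈ s, HasSubgaussianMGF (X i) (c i) μ) {ε : ℝ} (hε : 0 ≤ ε) :
    μ.real {ω | ∑ i ∈ s, X i ω ≤ -ε} ≤ exp (-ε ^ 2 / (2 * ∑ i ∈ s, c i)) := by
  have h := measure_sum_ge_le_of_iIndepFun (X := fun i ω ↦ -X i ω)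
    (h_indep.comp (fun _ x ↦ -x) fun _ ↦ measurable_neg) (fun i hi ↦ (h_subG i hi).neg) hε
  simpa only [sum_neg_distrib, le_neg] using h

end ProbabilityTheory.HasSubgaussianMGF

lemma exp_neg_mul_posLog_le {c x : ℝ} (hc : 1 ≤ c) (hx : 0 < x) :
    exp (-(c * posLog x)) ≤ x⁻¹ := by
  calc exp (-(c * posLog x)) ≤ exp (-Real.log x) := by
        gcongr
        exact (le_max_left _ _).trans (le_mul_of_one_le_left (le_max_right _ _) hc)
    _ = x⁻¹ := by rw [Real.exp_neg, Real.exp_log hx]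

lemma mul_exp_neg_two_mul_le (u : ℝ) : u * exp (-(2 * u)) ≤ exp (-u) - exp (-(2 * u)) := by
  have h : exp (-(2 * u)) = exp (-u) * exp (-u) := by rw [← Real.exp_add]; ring_nf
  have hu : exp (-u) * (1 + u) ≤ 1 := by
    calc exp (-u) * (1 + u) ≤ exp (-u) * exp u := by gcongr; linarith [Real.add_one_le_exp u]
      _ = 1 := by rw [← Real.exp_add, neg_add_cancel, Real.exp_zero]
  rw [h]
  nlinarith [Real.exp_pos (-u)]

lemma sum_two_pow_mul_exp_neg_le {c : ℝ} (hc : 0 < c) (n : ℕ) :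
    ∑ i ∈ range n, (2 : ℝ) ^ i * exp (-(2 ^ i * c)) ≤ 2 / c := by
  set f : ℕ → ℝ := fun i ↦ exp (-(2 ^ i * c / 2))
  have hterm : ∀ i, c * (2 ^ i * exp (-(2 ^ i * c))) ≤ 2 * (f i - f (i + 1)) := fun i ↦ by
    have h := mul_exp_neg_two_mul_le (2 ^ i * c / 2)
    simp only [f, pow_succ]
    ring_nf at h ⊢
    linarith
  rw [le_div_iff₀ hc, mul_comm, mul_sum]
  calc ∑ i ∈ range n, c * (2 ^ i * exp (-(2 ^ i * c)))
      ≤ ∑ i ∈ range n, 2 * (f i - f (i + 1)) := sum_le_sum fun i _ ↦ hterm i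
    _ = 2 * (f 0 - f n) := by rw [← mul_sum, sum_range_sub']
    _ ≤ 2 := by
      have : f 0 ≤ 1 := Real.exp_le_one_iff.2 (by simp only [pow_zero, one_mul]; linarith)
      linarith [Real.exp_pos (-(2 ^ n * c / 2))]

lemma measureReal_exists_le_le_sum {Ω : Type*} {mΩ : MeasurableSpace Ω} {μ : Measure Ω}
    [IsFiniteMeasure μ] (P : ℕ → Ω → Prop) (m : ℕ) :
    μ.real {ω | ∃ i ≤ m, P i ω} ≤ ∑ i ∈ range (m + 1), μ.real {ω | P i ω} := by
  convert measureReal_biUnion_finset_le (μ := μ) (range (m + 1)) (fun i ↦ {ω | P i ω}) using 2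
  ext ω
  simp

lemma measureReal_avg_add_sqrt_mul_posLog_add_nonpos_le {Ω : Type*} {mΩ : MeasurableSpace Ω}
    {μ : Measure Ω} {X : ℕ → Ω → ℝ} (hindep : iIndepFun X μ)
    (hlaw : ∀ i, μ.map (X i) = gaussianReal 0 1) {n : ℕ} (hn : 0 < n) {T N α Δ : ℝ}
    (hT : 0 < T) (hN : 0 < N) (hα : 2 ≤ α) (hΔ : 0 ≤ Δ) :
    μ.real {ω | (1 / (n : ℝ)) * ∑ j ∈ Icc 1 n, X j ω
        + Real.sqrt ((α / n) * posLog (T / (n * N))) + Δ ≤ 0}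
      ≤ n * N / T * exp (-(n * (Δ ^ 2 / 2))) := by
  have hn' : (0 : ℝ) < n := Nat.cast_pos.2 hn
  set L := posLog (T / (n * N))
  set R := Real.sqrt ((α / n) * L)
  have hL : 0 ≤ L := le_max_right _ _
  have hR : 0 ≤ R := Real.sqrt_nonneg _
  have hnR : n * R ^ 2 = α * L := by
    rw [Real.sq_sqrt (by positivity)]
    field_simp
  have hevent : {ω | (1 / (n : ℝ)) * ∑ j ∈ Icc 1 n, X j ω + R + Δ ≤ 0}
      = {ω | ∑ j ∈ Icc 1 n, X j ω ≤ -(n * (R + Δ))} := by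
    ext ω
    simp only [Set.mem_ofPred_eq, add_assoc, ← le_neg_iff_add_nonpos_right, one_div,
      inv_mul_eq_div, div_le_iff₀ hn', neg_mul, mul_comm (R + Δ)]
  have hhoeffding := HasSubgaussianMGF.measureReal_sum_le_neg_le_of_iIndepFun hindep
    (s := Icc 1 n) (fun i _ ↦ HasSubgaussianMGF.of_map_eq_gaussianReal (hlaw i))
    (by positivity : 0 ≤ n * (R + Δ))
  simp only [sum_const, Nat.card_Icc, add_tsub_cancel_right, nsmul_eq_mul, mul_one,
    NNReal.coe_natCast] at hhoeffding
  rw [hevent]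
  refine hhoeffding.trans ?_
  calc exp (-(n * (R + Δ)) ^ 2 / (2 * n))
      ≤ exp (-((α / 2) * L) + -(n * (Δ ^ 2 / 2))) := by
        gcongr
        rw [div_le_iff₀ (by positivity)]
        nlinarith [mul_nonneg (mul_nonneg hn'.le hR) hΔ]
    _ = exp (-((α / 2) * L)) * exp (-(n * (Δ ^ 2 / 2))) := Real.exp_add _ _
    _ ≤ (T / (n * N))⁻¹ * exp (-(n * (Δ ^ 2 / 2))) := by
        gcongr
        exact exp_neg_mul_posLog_le (by linarith) (by positivity)
    _ = n * N / T * exp (-(n * (Δ ^ 2 / 2))) := by rw [inv_div]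

theorem gaussian_powers_of_two_concentration_general {Ω : Type*} [MeasureSpace Ω]
    [IsProbabilityMeasure (ℙ : Measure Ω)]
    (X : ℕ → Ω → ℝ)
    (hindep : iIndepFun (m := fun _ => Real.measurableSpace) X ℙ)
    (hlaw : ∀ i, Measure.map (X i) ℙ = gaussianReal 0 1)
    (T N : ℕ) (hN : 1 ≤ N) (hNT : N ≤ T)
    (α : ℝ) (hα : 2 < α) (Δ : ℝ) (hΔ : 0 < Δ) :
    (ℙ {ω | ∃ i ≤ Nat.log 2 T,
          (1 / ((2 ^ i : ℕ) : ℝ)) * ∑ j ∈ Finset.Icc 1 (2 ^ i), X j ω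
            + Real.sqrt ((α / ((2 ^ i : ℕ) : ℝ)) * posLog ((T : ℝ) / (((2 ^ i : ℕ) : ℝ) * N)))
            + Δ ≤ 0}).toReal
      ≤ 4 * N / (T * Δ ^ 2) := by
  have hN' : (0 : ℝ) < N := by exact_mod_cast hN
  have hT : (0 : ℝ) < T := by exact_mod_cast hN.trans hNT
  rw [← measureReal_def]
  calc _ ≤ ∑ i ∈ range (Nat.log 2 T + 1),
          (2 ^ i : ℕ) * N / T * exp (-((2 ^ i : ℕ) * (Δ ^ 2 / 2))) :=
        (measureReal_exists_le_le_sum _ _).trans <| sum_le_sum fun i _ ↦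
          measureReal_avg_add_sqrt_mul_posLog_add_nonpos_le hindep hlaw (by positivity) hT hN'
            hα.le hΔ.le
    _ = N / T * ∑ i ∈ range (Nat.log 2 T + 1),
          (2 : ℝ) ^ i * exp (-(2 ^ i * (Δ ^ 2 / 2))) := by
        rw [mul_sum]
        push_cast
        ring_nf
    _ ≤ N / T * (2 / (Δ ^ 2 / 2)) := by
        gcongr
        exact sum_two_pow_mul_exp_neg_le (by positivity) _
    _ = 4 * N / (T * Δ ^ 2) := by field_simp; ring

/-- Maximal concentration bound over powers of two for averages of independent standard
Gaussian variables: for `T ≥ N ≥ 1`, `α > 2`, `Δ > 0`,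
`P(∃ s ∈ 𝔅, β̂_s + √((α/s)·log⁺(T/(sN))) + Δ ≤ 0) ≤ 4N/(TΔ²)`, where
`𝔅 = {2^i : 0 ≤ i ≤ ⌊log₂ T⌋}` and `β̂_s = (1/s)·∑_{j=1}^s X_j`. -/
theorem gaussian_powers_of_two_concentration {Ω : Type*} [MeasureSpace Ω]
    [IsProbabilityMeasure (ℙ : Measure Ω)]
    (X : ℕ → Ω → ℝ) (hmeas : ∀ i, Measurable (X i))
    (hindep : iIndepFun (m := fun _ => Real.measurableSpace) X ℙ)
    (hlaw : ∀ i, Measure.map (X i) ℙ = gaussianReal 0 1)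
    (T N : ℕ) (hN : 1 ≤ N) (hNT : N ≤ T)
    (α : ℝ) (hα : 2 < α) (Δ : ℝ) (hΔ : 0 < Δ) :
    (ℙ {ω | ∃ i ≤ Nat.log 2 T,
          (1 / ((2 ^ i : ℕ) : ℝ)) * ∑ j ∈ Finset.Icc 1 (2 ^ i), X j ω
            + Real.sqrt ((α / ((2 ^ i : ℕ) : ℝ)) * posLog ((T : ℝ) / (((2 ^ i : ℕ) : ℝ) * N)))
            + Δ ≤ 0}).toReal
      ≤ 4 * N / (T * Δ ^ 2) :=
  gaussian_powers_of_two_concentration_general X hindep hlaw T N hN hNT α hα Δ hΔ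
end

section
/- Fix ρ ∈ (1/2, 1). Let X₁, X₂, … be independent random variables with mean μ₁ such that X_i − μ₁ is 1-subgaussian, and let μ̂_s = (1/s)·Σ_{i=1}^{s} X_i. For s ≥ 1 let h(s) = 2^{⌊log₂ s⌋} and, for ε > 0, define the random variable G'_{1h(s)}(ε) = 1 − Φ(√(ρ·h(s))·(μ₁ − ε − μ̂_{h(s)})). Then there exists a constant c > 0 (depending only on ρ) such that for every integer T ≥ 1 and every ε > 0, E[ Σ_{s=1}^{T−1} ( 1/G'_{1h(s)}(ε) − 1 ) ] ≤ c/ε². -/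
open MeasureTheory ProbabilityTheory
open scoped ProbabilityTheory BigOperators

/-- The standard normal CDF `Φ`. -/
noncomputable def stdGaussianCDF (x : ℝ) : ℝ := ((gaussianReal 0 1) (Set.Iic x)).toReal

/-- `h s` is the largest power of two less than or equal to `s` (for `s ≥ 1`). -/
def hpow (s : ℕ) : ℕ := 2 ^ Nat.log 2 s

open Real Finset
open scoped ENNReal

/-!
Write `Y = √(ρn) (μ₁ - ε - μ̂ₙ)` and `B = √(ρn) ε`. Independence and the subgaussian hypothesis
give `E[exp (u Y)] ≤ exp (u²ρ/2 - uB)` for `u ≥ 0`. The odds `Φ(x) / (1 - Φ(x)) = 1/G' - 1` are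
at most `√(2π) e^{(x⁺+1)²/2}`, and at most `√(2π) e^{1+x}` for `x ≤ 0` (Chernoff), so they are
dominated by a series `∑ₖ cₖ e^{kx}` over `k ≥ 1` whose terms are exponential moments of `Y`;
because `ρ < 1` the resulting series converges and `E[odds(Y)] ≤ C_ρ e^{-B}`. As `h(s) ≥ s/2`,
the sum over `s` is at most `C_ρ ∑ₛ exp (-√(ρ/2) ε √s) = O(1/(ρε²))`, which is bounded by
grouping `s` by `⌊√s⌋`.

The hypothesis on `∫ exp (l (Xᵢ - μ₁))` is vacuous where the integrand is not integrable (the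
integral is then `0`). This is harmless: if the sum of odds is not integrable, its integral is `0`;
if it is, the exponential moments it dominates are finite.
-/

lemma stdGaussianCDF_le_exp (x : ℝ) {t : ℝ} (ht : t ≤ 0) :
    stdGaussianCDF x ≤ exp (-t * x + t ^ 2 / 2) := by
  have h := measure_le_le_exp_mul_mgf (X := id) (μ := gaussianReal 0 1) x ht
    (integrable_exp_mul_gaussianReal t)
  rw [mgf_id_gaussianReal, ← exp_add] at h
  simp only [id_eq, zero_mul, NNReal.coe_one, one_mul, zero_add] at h
  exact h

lemma one_sub_stdGaussianCDF_eq_measureReal_Ioi (x : ℝ) :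
    1 - stdGaussianCDF x = (gaussianReal 0 1).real (Set.Ioi x) := by
  rw [← Set.compl_Iic, probReal_compl_eq_one_sub measurableSet_Iic, stdGaussianCDF, measureReal_def]

lemma one_sub_stdGaussianCDF_le_exp (x : ℝ) {t : ℝ} (ht : 0 ≤ t) :
    1 - stdGaussianCDF x ≤ exp (-t * x + t ^ 2 / 2) := by
  have h := measure_ge_le_exp_mul_mgf (X := id) (μ := gaussianReal 0 1) x ht
    (integrable_exp_mul_gaussianReal t)
  rw [mgf_id_gaussianReal, ← exp_add] at h
  simp only [id_eq, zero_mul, NNReal.coe_one, one_mul, zero_add] at h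
  rw [one_sub_stdGaussianCDF_eq_measureReal_Ioi]
  exact (measureReal_mono fun y (hy : x < y) => hy.le).trans h

lemma gaussianPDFReal_le_one_sub_stdGaussianCDF {x a : ℝ} (ha : 0 ≤ a) (hxa : x ≤ a) :
    gaussianPDFReal 0 1 (a + 1) ≤ 1 - stdGaussianCDF x := by
  have hint := integrable_gaussianPDFReal 0 1
  calc gaussianPDFReal 0 1 (a + 1)
      = gaussianPDFReal 0 1 (a + 1) * volume.real (Set.Ioc a (a + 1)) := by simp
    _ ≤ ∫ t in Set.Ioc a (a + 1), gaussianPDFReal 0 1 t := by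
        refine setIntegral_ge_of_const_le_real measurableSet_Ioc (by simp) (fun t ht => ?_)
          hint.integrableOn
        simp only [gaussianPDFReal, sub_zero, NNReal.coe_one, mul_one]
        gcongr
        all_goals linarith [ht.1, ht.2]
    _ ≤ ∫ t in Set.Ioi x, gaussianPDFReal 0 1 t :=
        setIntegral_mono_set hint.integrableOn (ae_of_all _ (gaussianPDFReal_nonneg 0 1))
          (LE.le.eventuallyLE fun t (ht : t ∈ Set.Ioc a (a + 1)) => hxa.trans_lt ht.1)
    _ = 1 - stdGaussianCDF x := by
        rw [one_sub_stdGaussianCDF_eq_measureReal_Ioi, measureReal_def,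
          gaussianReal_apply_eq_integral 0 one_ne_zero,
          ENNReal.toReal_ofReal (setIntegral_nonneg measurableSet_Ioi
            fun t _ => gaussianPDFReal_nonneg 0 1 t)]

lemma one_sub_stdGaussianCDF_pos (x : ℝ) : 0 < 1 - stdGaussianCDF x :=
  (gaussianPDFReal_pos 0 1 _ one_ne_zero).trans_le
    (gaussianPDFReal_le_one_sub_stdGaussianCDF (le_max_right x 0) (le_max_left x 0))

lemma one_div_one_sub_stdGaussianCDF_le {x a : ℝ} (ha : 0 ≤ a) (hxa : x ≤ a) :
    1 / (1 - stdGaussianCDF x) ≤ √(2 * π) * exp ((a + 1) ^ 2 / 2) := by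
  have hpdf : gaussianPDFReal 0 1 (a + 1) = (√(2 * π) * exp ((a + 1) ^ 2 / 2))⁻¹ := by
    simp [gaussianPDFReal, ← exp_neg, neg_div]
    ring
  rw [one_div, ← inv_inv (√(2 * π) * exp ((a + 1) ^ 2 / 2)), ← hpdf]
  exact inv_anti₀ (gaussianPDFReal_pos 0 1 _ one_ne_zero)
    (gaussianPDFReal_le_one_sub_stdGaussianCDF ha hxa)

noncomputable def stdGaussianOdds (x : ℝ) : ℝ := 1 / (1 - stdGaussianCDF x) - 1

lemma stdGaussianOdds_nonneg (x : ℝ) : 0 ≤ stdGaussianOdds x := by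
  have hCDF : 0 ≤ stdGaussianCDF x := ENNReal.toReal_nonneg
  rw [stdGaussianOdds, sub_nonneg]
  exact one_le_one_div (one_sub_stdGaussianCDF_pos x) (by linarith)

lemma measurable_stdGaussianOdds : Measurable stdGaussianOdds := by
  have hmono : Monotone stdGaussianCDF := fun x y hxy =>
    ENNReal.toReal_mono (measure_ne_top _ _) (measure_mono (Set.Iic_subset_Iic.2 hxy))
  exact (measurable_const.div (hmono.measurable.const_sub 1)).sub_const 1

lemma exp_mul_le_exp_mul_stdGaussianOdds_add_one (x : ℝ) {v : ℝ} (hv : 0 ≤ v) :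
    exp (v * x) ≤ exp (v ^ 2 / 2) * (stdGaussianOdds x + 1) := by
  have hpos := one_sub_stdGaussianCDF_pos x
  rw [stdGaussianOdds, sub_add_cancel, ← div_eq_mul_one_div, le_div_iff₀ hpos]
  calc exp (v * x) * (1 - stdGaussianCDF x) ≤ exp (v * x) * exp (-v * x + v ^ 2 / 2) := by
        gcongr; exact one_sub_stdGaussianCDF_le_exp x hv
    _ = exp (v ^ 2 / 2) := by rw [← exp_add]; ring_nf

lemma exists_stdGaussianOdds_le (x : ℝ) : ∃ k : ℕ,
    stdGaussianOdds x ≤ √(2 * π) * exp (1 / 2 + (k + 1) - (k + 1) ^ 2 / 2 + (k + 1) * x) := by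
  rcases le_or_gt x 0 with hx | hx
  · refine ⟨0, ?_⟩
    have hpos := one_sub_stdGaussianCDF_pos x
    have hodds : stdGaussianOdds x = stdGaussianCDF x * (1 / (1 - stdGaussianCDF x)) := by
      rw [stdGaussianOdds]; field_simp; ring
    calc stdGaussianOdds x = stdGaussianCDF x * (1 / (1 - stdGaussianCDF x)) := hodds
      _ ≤ exp (x + 1 / 2) * (√(2 * π) * exp ((0 + 1) ^ 2 / 2)) := by
          gcongr
          · simpa using stdGaussianCDF_le_exp x (t := -1) (by norm_num)
          · exact one_div_one_sub_stdGaussianCDF_le le_rfl hx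
      _ = _ := by rw [mul_left_comm, ← exp_add]; congr 2; push_cast; ring
  · -- `d = ⌊x⌋₊ + 1 - x ∈ (0, 1]`, and the two exponents differ by `d - d² / 2 ≥ 0`.
    refine ⟨⌊x⌋₊, ?_⟩
    have hfloor := Nat.floor_le hx.le
    have hfloor' := Nat.lt_floor_add_one x
    calc stdGaussianOdds x ≤ 1 / (1 - stdGaussianCDF x) := by rw [stdGaussianOdds]; linarith
      _ ≤ √(2 * π) * exp ((x + 1) ^ 2 / 2) := one_div_one_sub_stdGaussianCDF_le hx.le le_rfl
      _ ≤ _ := by gcongr; nlinarith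

lemma exp_neg_natCast_le_inv_two_pow (n : ℕ) : exp (-n) ≤ 2⁻¹ ^ n := by
  have h : exp (-1) ≤ 2⁻¹ := by
    rw [exp_neg]
    exact inv_anti₀ (by norm_num) (by linarith [add_one_le_exp (1 : ℝ)])
  calc exp (-n) = exp (-1) ^ n := by rw [← exp_nat_mul]; ring_nf
    _ ≤ 2⁻¹ ^ n := by gcongr

-- Completing the square, `K - (1 - ρ) K² / 2 ≤ 2 / (1 - ρ) - K`: this is where `ρ < 1` enters.
lemma odds_series_term_le {ρ B : ℝ} (hρ : ρ < 1) (hB : 0 ≤ B) (k : ℕ) :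
    √(2 * π) * exp (1 / 2 + (k + 1) - (k + 1) ^ 2 / 2) *
        exp ((k + 1) ^ 2 * ρ / 2 - (k + 1) * B) ≤
      √(2 * π) * exp (1 / 2 + 2 / (1 - ρ)) * exp (-B) * 2⁻¹ ^ (k + 1) := by
  have hβ : 0 < 1 - ρ := by linarith
  have hsq : 2 * (k + 1) - (1 - ρ) * (k + 1) ^ 2 / 2 ≤ 2 / (1 - ρ) := by
    rw [le_div_iff₀ hβ]; nlinarith [sq_nonneg ((1 - ρ) * (k + 1) - 2)]
  calc √(2 * π) * exp (1 / 2 + (k + 1) - (k + 1) ^ 2 / 2) *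
        exp ((k + 1) ^ 2 * ρ / 2 - (k + 1) * B)
      ≤ √(2 * π) * exp (1 / 2 + 2 / (1 - ρ) + -B + -((k + 1 : ℕ) : ℝ)) := by
        rw [mul_assoc, ← exp_add]
        exact mul_le_mul_of_nonneg_left (exp_le_exp.2 (by push_cast; nlinarith)) (by positivity)
    _ ≤ √(2 * π) * exp (1 / 2 + 2 / (1 - ρ)) * exp (-B) * 2⁻¹ ^ (k + 1) := by
        rw [exp_add, exp_add, ← mul_assoc, ← mul_assoc]
        gcongr
        exact exp_neg_natCast_le_inv_two_pow _

section Odds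

variable {Ω : Type*} [MeasurableSpace Ω] {P : Measure Ω} {Y : Ω → ℝ}

lemma lintegral_stdGaussianOdds_le (hY : Measurable Y) {ρ B : ℝ} (hρ : ρ < 1) (hB : 0 ≤ B)
    (hmgf : ∀ u, 0 ≤ u → ∫⁻ ω, ENNReal.ofReal (exp (u * Y ω)) ∂P ≤
      ENNReal.ofReal (exp (u ^ 2 * ρ / 2 - u * B))) :
    ∫⁻ ω, ENNReal.ofReal (stdGaussianOdds (Y ω)) ∂P ≤
      ENNReal.ofReal (√(2 * π) * exp (1 / 2 + 2 / (1 - ρ)) * exp (-B)) := by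
  set A := √(2 * π) * exp (1 / 2 + 2 / (1 - ρ)) * exp (-B)
  let c : ℕ → ℝ := fun k => √(2 * π) * exp (1 / 2 + (k + 1) - (k + 1) ^ 2 / 2)
  have hpoint : ∀ ω, ENNReal.ofReal (stdGaussianOdds (Y ω)) ≤
      ∑' k : ℕ, ENNReal.ofReal (c k) * ENNReal.ofReal (exp ((k + 1) * Y ω)) := fun ω => by
    obtain ⟨k, hk⟩ := exists_stdGaussianOdds_le (Y ω)
    refine le_trans ?_ (ENNReal.le_tsum k)
    rw [← ENNReal.ofReal_mul (by positivity), mul_assoc, ← exp_add]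
    exact ENNReal.ofReal_le_ofReal hk
  calc ∫⁻ ω, ENNReal.ofReal (stdGaussianOdds (Y ω)) ∂P
      ≤ ∑' k : ℕ, ENNReal.ofReal (c k) * ∫⁻ ω, ENNReal.ofReal (exp ((k + 1) * Y ω)) ∂P := by
        refine (lintegral_mono hpoint).trans_eq ?_
        rw [lintegral_tsum fun k => by fun_prop]
        congr 1 with k
        exact lintegral_const_mul _ (by fun_prop)
    _ ≤ ∑' k : ℕ, ENNReal.ofReal (c k) *
          ENNReal.ofReal (exp ((k + 1) ^ 2 * ρ / 2 - (k + 1) * B)) := by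
        gcongr with k
        exact hmgf _ (by positivity)
    _ ≤ ∑' k : ℕ, ENNReal.ofReal A * 2⁻¹ ^ (k + 1) := by
        refine ENNReal.tsum_le_tsum fun k => ?_
        rw [← ENNReal.ofReal_mul (by positivity), ← ENNReal.ofReal_ofNat,
          ← ENNReal.ofReal_inv_of_pos two_pos, ← ENNReal.ofReal_pow (by norm_num),
          ← ENNReal.ofReal_mul (by positivity)]
        exact ENNReal.ofReal_le_ofReal (odds_series_term_le hρ hB k)
    _ = ENNReal.ofReal A := by
        rw [ENNReal.tsum_mul_left, ENNReal.tsum_geometric_add_one, ENNReal.one_sub_inv_two,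
          ENNReal.mul_inv_cancel (by norm_num) (by norm_num), mul_one]

lemma lintegral_exp_mul_ne_top_of_lintegral_stdGaussianOdds_ne_top [IsFiniteMeasure P]
    (h : ∫⁻ ω, ENNReal.ofReal (stdGaussianOdds (Y ω)) ∂P ≠ ∞) {v : ℝ} (hv : 0 ≤ v) :
    ∫⁻ ω, ENNReal.ofReal (exp (v * Y ω)) ∂P ≠ ∞ := by
  refine ne_top_of_le_ne_top (b := ∫⁻ ω, ENNReal.ofReal (exp (v ^ 2 / 2)) *
    (ENNReal.ofReal (stdGaussianOdds (Y ω)) + 1) ∂P) ?_ (lintegral_mono fun ω => ?_)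
  · rw [lintegral_const_mul' _ _ ENNReal.ofReal_ne_top, lintegral_add_right _ measurable_const]
    simp [ENNReal.mul_eq_top, h]
  · rw [← ENNReal.ofReal_one, ← ENNReal.ofReal_add (stdGaussianOdds_nonneg _) zero_le_one,
      ← ENNReal.ofReal_mul (exp_nonneg _)]
    exact ENNReal.ofReal_le_ofReal (exp_mul_le_exp_mul_stdGaussianOdds_add_one _ hv)

end Odds

section SampleMean

variable {Ω : Type*} {X : ℕ → Ω → ℝ} {μ ε : ℝ} {n : ℕ}

noncomputable def sampleMean (X : ℕ → Ω → ℝ) (n : ℕ) (ω : Ω) : ℝ :=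
  1 / (n : ℝ) * ∑ i ∈ Icc 1 n, X i ω

lemma exp_mul_sub_sampleMean (hn : 1 ≤ n) (c : ℝ) (ω : Ω) :
    exp (c * (μ - ε - sampleMean X n ω)) =
      exp (-(c * ε)) * ∏ i ∈ Icc 1 n, exp (-(c / n) * (X i ω - μ)) := by
  have hn' : (n : ℝ) ≠ 0 := by positivity
  rw [← exp_sum, ← exp_add, sampleMean, ← mul_sum, sum_sub_distrib, sum_const, Nat.card_Icc,
    Nat.add_sub_cancel, nsmul_eq_mul]
  field_simp
  ring_nf

variable [MeasurableSpace Ω] {P : Measure Ω}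

lemma measurable_sampleMean (hX : ∀ i, Measurable (X i)) : Measurable (sampleMean X n) :=
  (Finset.measurable_sum _ fun i _ => hX i).const_mul _

lemma lintegral_exp_mul_sub_sampleMean (hX : ∀ i, Measurable (X i)) (hind : iIndepFun X P)
    (hn : 1 ≤ n) (c : ℝ) :
    ∫⁻ ω, ENNReal.ofReal (exp (c * (μ - ε - sampleMean X n ω))) ∂P =
      ENNReal.ofReal (exp (-(c * ε))) *
        ∏ i ∈ Icc 1 n, ∫⁻ ω, ENNReal.ofReal (exp (-(c / n) * (X i ω - μ))) ∂P := by
  let g : ℕ → ℝ → ℝ≥0∞ := fun _ x => ENNReal.ofReal (exp (-(c / n) * (x - μ)))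
  have hg : ∀ i, Measurable (g i) := fun i => by fun_prop
  simp_rw [exp_mul_sub_sampleMean hn, ENNReal.ofReal_mul (exp_nonneg _),
    ENNReal.ofReal_prod_of_nonneg fun i _ => exp_nonneg _]
  rw [lintegral_const_mul' _ _ ENNReal.ofReal_ne_top]
  exact congrArg _ (lintegral_prod_eq_prod_lintegral_of_indepFun _ (fun i => g i ∘ X i)
    (hind.comp g hg) fun i => (hg i).comp (hX i))

lemma lintegral_exp_mul_sub_sampleMean_le (hX : ∀ i, Measurable (X i)) (hind : iIndepFun X P)
    (hsub : ∀ i ∈ Icc 1 n, ∀ l ≤ 0,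
      ∫⁻ ω, ENNReal.ofReal (exp (l * (X i ω - μ))) ∂P ≤ ENNReal.ofReal (exp (l ^ 2 / 2)))
    (hn : 1 ≤ n) {c : ℝ} (hc : 0 ≤ c) :
    ∫⁻ ω, ENNReal.ofReal (exp (c * (μ - ε - sampleMean X n ω))) ∂P ≤
      ENNReal.ofReal (exp (c ^ 2 / (2 * n) - c * ε)) := by
  have hl : -(c / n) ≤ 0 := neg_nonpos.2 (by positivity)
  rw [lintegral_exp_mul_sub_sampleMean hX hind hn]
  calc ENNReal.ofReal (exp (-(c * ε))) *
        ∏ i ∈ Icc 1 n, ∫⁻ ω, ENNReal.ofReal (exp (-(c / n) * (X i ω - μ))) ∂P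
      ≤ ENNReal.ofReal (exp (-(c * ε))) *
          ∏ i ∈ Icc 1 n, ENNReal.ofReal (exp ((-(c / n)) ^ 2 / 2)) := by
        gcongr with i hi
        exact hsub i hi _ hl
    _ = ENNReal.ofReal (exp (c ^ 2 / (2 * n) - c * ε)) := by
        have hn' : (n : ℝ) ≠ 0 := by positivity
        rw [prod_const, Nat.card_Icc, Nat.add_sub_cancel, ← ENNReal.ofReal_pow (exp_nonneg _),
          ← ENNReal.ofReal_mul (exp_nonneg _), ← exp_nat_mul, ← exp_add]
        congr 2
        field_simp
        ring

lemma integrable_exp_of_lintegral_exp_mul_sub_sampleMean_ne_top [IsProbabilityMeasure P]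
    (hX : ∀ i, Measurable (X i)) (hind : iIndepFun X P) (hn : 1 ≤ n)
    (hfin : ∀ c, 0 ≤ c → ∫⁻ ω, ENNReal.ofReal (exp (c * (μ - ε - sampleMean X n ω))) ∂P ≠ ∞) :
    ∀ i ∈ Icc 1 n, ∀ l ≤ 0, Integrable (fun ω => exp (l * (X i ω - μ))) P := by
  intro i hi l hl
  have hmeas : ∀ j, Measurable fun ω => ENNReal.ofReal (exp (l * (X j ω - μ))) :=
    fun j => by fun_prop
  have hpos : ∀ j, ∫⁻ ω, ENNReal.ofReal (exp (l * (X j ω - μ))) ∂P ≠ 0 := fun j => by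
    refine ((lintegral_pos_iff_support (hmeas j)).2 ?_).ne'
    simp [Function.support, exp_pos]
  have hprod := hfin (-l * n) (by nlinarith [(n.cast_nonneg : (0 : ℝ) ≤ n)])
  have hn' : (n : ℝ) ≠ 0 := by positivity
  rw [lintegral_exp_mul_sub_sampleMean hX hind hn, show -(-l * n / n) = l by field_simp] at hprod
  have hprod' : ∏ j ∈ Icc 1 n, ∫⁻ ω, ENNReal.ofReal (exp (l * (X j ω - μ))) ∂P ≠ ∞ := fun h =>
    hprod (by rw [h, ENNReal.mul_top (ENNReal.ofReal_pos.2 (exp_pos _)).ne'])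
  rw [← mul_prod_erase _ _ hi] at hprod'
  have hfactor : ∫⁻ ω, ENNReal.ofReal (exp (l * (X i ω - μ))) ∂P ≠ ∞ := fun h =>
    hprod' (by rw [h, ENNReal.top_mul (prod_ne_zero_iff.2 fun j _ => hpos j)])
  exact (lintegral_ofReal_ne_top_iff_integrable (by fun_prop : Measurable _).aestronglyMeasurable
    (ae_of_all _ fun ω => exp_nonneg _)).1 hfactor

end SampleMean

section Statistic

variable {Ω : Type*} [MeasurableSpace Ω] {P : Measure Ω} [IsProbabilityMeasure P]
  {X : ℕ → Ω → ℝ} {μ ρ ε : ℝ} {n : ℕ}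

lemma lintegral_exp_le_of_integrable_stdGaussianOdds (hX : ∀ i, Measurable (X i))
    (hind : iIndepFun X P)
    (hmgf : ∀ i ∈ Icc 1 n, ∀ l ≤ 0, ∫ ω, exp (l * (X i ω - μ)) ∂P ≤ exp (l ^ 2 / 2))
    (hρ : 0 < ρ) (hn : 1 ≤ n)
    (hint : Integrable (fun ω => stdGaussianOdds (√(ρ * n) * (μ - ε - sampleMean X n ω))) P) :
    ∀ i ∈ Icc 1 n, ∀ l ≤ 0,
      ∫⁻ ω, ENNReal.ofReal (exp (l * (X i ω - μ))) ∂P ≤ ENNReal.ofReal (exp (l ^ 2 / 2)) := by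
  have hr : 0 < √(ρ * n) := by positivity
  have hfin : ∀ c, 0 ≤ c →
      ∫⁻ ω, ENNReal.ofReal (exp (c * (μ - ε - sampleMean X n ω))) ∂P ≠ ∞ := fun c hc => by
    have := lintegral_exp_mul_ne_top_of_lintegral_stdGaussianOdds_ne_top
      hint.lintegral_lt_top.ne (v := c / √(ρ * n)) (by positivity)
    simpa only [← mul_assoc, div_mul_cancel₀ _ hr.ne'] using this
  intro i hi l hl
  rw [← ofReal_integral_eq_lintegral_ofReal
    (integrable_exp_of_lintegral_exp_mul_sub_sampleMean_ne_top hX hind hn hfin i hi l hl)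
    (ae_of_all _ fun _ => exp_nonneg _)]
  exact ENNReal.ofReal_le_ofReal (hmgf i hi l hl)

theorem integral_stdGaussianOdds_sampleMean_le (hX : ∀ i, Measurable (X i))
    (hind : iIndepFun X P)
    (hmgf : ∀ i ∈ Icc 1 n, ∀ l ≤ 0, ∫ ω, exp (l * (X i ω - μ)) ∂P ≤ exp (l ^ 2 / 2))
    (hρ : ρ ∈ Set.Ioo 0 1) (hε : 0 ≤ ε) (hn : 1 ≤ n)
    (hint : Integrable (fun ω => stdGaussianOdds (√(ρ * n) * (μ - ε - sampleMean X n ω))) P) :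
    ∫ ω, stdGaussianOdds (√(ρ * n) * (μ - ε - sampleMean X n ω)) ∂P ≤
      √(2 * π) * exp (1 / 2 + 2 / (1 - ρ)) * exp (-(√(ρ * n) * ε)) := by
  have hρ0 := hρ.1
  have hsub := lintegral_exp_le_of_integrable_stdGaussianOdds hX hind hmgf hρ0 hn hint
  have hlint := lintegral_stdGaussianOdds_le (P := P)
    (Y := fun ω => √(ρ * n) * (μ - ε - sampleMean X n ω))
    (((measurable_sampleMean hX).const_sub _).const_mul _) hρ.2 (B := √(ρ * n) * ε) (by positivity)
    fun u hu => by
      simp only [← mul_assoc]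
      refine (lintegral_exp_mul_sub_sampleMean_le hX hind hsub hn (by positivity)).trans_eq ?_
      rw [mul_pow, sq_sqrt (by positivity)]
      congr 2
      field_simp
  rw [integral_eq_lintegral_of_nonneg_ae (ae_of_all _ fun ω => stdGaussianOdds_nonneg _)
    hint.aestronglyMeasurable]
  exact ENNReal.toReal_le_of_le_ofReal (by positivity) hlint

end Statistic

lemma sum_Icc_comp_sqrt_le {g : ℕ → ℝ} (hg : ∀ k, 0 ≤ g k) (m : ℕ) :
    ∑ s ∈ Icc 1 m, g (Nat.sqrt s) ≤ ∑ k ∈ Icc 1 m, (2 * k + 1) * g k := by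
  have hmaps : ∀ s ∈ Icc 1 m, Nat.sqrt s ∈ Icc 1 m := fun s hs => by
    obtain ⟨h1, h2⟩ := mem_Icc.1 hs
    exact mem_Icc.2 ⟨Nat.sqrt_pos.2 h1, (Nat.sqrt_le_self s).trans h2⟩
  rw [← sum_fiberwise_of_maps_to' hmaps]
  refine sum_le_sum fun k _ => ?_
  have hfiber : {s ∈ Icc 1 m | Nat.sqrt s = k} ⊆ Icc (k * k) (k * k + 2 * k) := fun s hs => by
    obtain ⟨-, rfl⟩ := mem_filter.1 hs
    exact mem_Icc.2 ⟨Nat.sqrt_le' s |>.trans_eq' (by ring), by linarith [Nat.sqrt_le_add s]⟩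
  have hcard : (#{s ∈ Icc 1 m | Nat.sqrt s = k} : ℝ) ≤ 2 * k + 1 := by
    have := card_le_card hfiber
    rw [Nat.card_Icc] at this
    exact_mod_cast (by omega : #{s ∈ Icc 1 m | Nat.sqrt s = k} ≤ 2 * k + 1)
  rw [sum_const, nsmul_eq_mul]
  exact mul_le_mul_of_nonneg_right hcard (hg k)

lemma exp_neg_div_one_sub_exp_neg_sq_le {b : ℝ} (hb : 0 < b) :
    exp (-b) / (1 - exp (-b)) ^ 2 ≤ 1 / b ^ 2 := by
  have hsinh : b * exp (-(b / 2)) ≤ 1 - exp (-b) := by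
    have h := self_le_sinh_iff.2 (by positivity : 0 ≤ b / 2)
    rw [sinh_eq] at h
    have : exp (b / 2) * exp (-(b / 2)) = 1 := by rw [← exp_add]; simp
    have : exp (-(b / 2)) * exp (-(b / 2)) = exp (-b) := by rw [← exp_add]; ring_nf
    nlinarith [exp_pos (-(b / 2))]
  have h1q : 0 < 1 - exp (-b) := by nlinarith [exp_pos (-(b / 2))]
  rw [div_le_div_iff₀ (by positivity) (by positivity), one_mul]
  calc exp (-b) * b ^ 2 = (b * exp (-(b / 2))) ^ 2 := by rw [mul_pow, ← exp_nat_mul]; ring_nf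
    _ ≤ (1 - exp (-b)) ^ 2 := by gcongr

lemma sum_exp_neg_mul_sqrt_le {b : ℝ} (hb : 0 < b) (m : ℕ) :
    ∑ s ∈ Icc 1 m, exp (-(b * √s)) ≤ 3 / b ^ 2 := by
  have hq0 : 0 ≤ exp (-b) := (exp_pos _).le
  have hq1 : ‖exp (-b)‖ < 1 := by
    rw [norm_of_nonneg hq0]; exact exp_lt_one_iff.2 (by linarith)
  calc ∑ s ∈ Icc 1 m, exp (-(b * √s))
      ≤ ∑ s ∈ Icc 1 m, exp (-b) ^ Nat.sqrt s := by
        refine sum_le_sum fun s _ => ?_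
        rw [← exp_nat_mul]
        gcongr
        nlinarith [Real.nat_sqrt_le_real_sqrt (a := s)]
    _ ≤ ∑ k ∈ Icc 1 m, (2 * k + 1) * exp (-b) ^ k :=
        sum_Icc_comp_sqrt_le (fun k => pow_nonneg hq0 k) m
    _ ≤ ∑ k ∈ Icc 1 m, 3 * (k * exp (-b) ^ k) := by
        refine sum_le_sum fun k hk => ?_
        have : (1 : ℝ) ≤ k := by exact_mod_cast (mem_Icc.1 hk).1
        nlinarith [pow_nonneg hq0 k]
    _ ≤ ∑' k : ℕ, 3 * (k * exp (-b) ^ k) :=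
        ((hasSum_coe_mul_geometric_of_norm_lt_one hq1).summable.mul_left 3).sum_le_tsum _
          (fun k _ => by positivity)
    _ = 3 * (exp (-b) / (1 - exp (-b)) ^ 2) := by
        rw [tsum_mul_left, tsum_coe_mul_geometric_of_norm_lt_one hq1]
    _ ≤ 3 * (1 / b ^ 2) := by rel [exp_neg_div_one_sub_exp_neg_sq_le hb]
    _ = 3 / b ^ 2 := by ring

lemma le_two_mul_hpow (s : ℕ) : s ≤ 2 * hpow s := by
  rw [hpow, ← pow_succ']
  exact (Nat.lt_pow_succ_log_self (by norm_num) s).le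

lemma exp_neg_sqrt_mul_hpow_le {ρ ε : ℝ} (hρ : 0 ≤ ρ) (hε : 0 ≤ ε) (s : ℕ) :
    exp (-(√(ρ * hpow s) * ε)) ≤ exp (-(√(ρ / 2) * ε * √s)) := by
  have hs : (s : ℝ) ≤ 2 * hpow s := by exact_mod_cast le_two_mul_hpow s
  have hsqrt : √(ρ / 2) * √s ≤ √(ρ * hpow s) := by
    rw [← sqrt_mul (by positivity)]
    exact sqrt_le_sqrt (by nlinarith)
  exact exp_le_exp.2 (by nlinarith)

lemma integrable_of_integrable_sum_of_nonneg {ι α : Type*} [MeasurableSpace α] {μ : Measure α}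
    {t : Finset ι} {f : ι → α → ℝ} (hf : ∀ i ∈ t, AEStronglyMeasurable (f i) μ)
    (hf0 : ∀ i ∈ t, ∀ x, 0 ≤ f i x) (hint : Integrable (fun x => ∑ i ∈ t, f i x) μ) {i : ι}
    (hi : i ∈ t) : Integrable (f i) μ :=
  hint.mono' (hf i hi) (ae_of_all _ fun x => by
    rw [norm_of_nonneg (hf0 i hi x)]
    exact single_le_sum (f := fun j => f j x) (fun j hj => hf0 j hj x) hi)

/-- Fix `ρ ∈ (1/2, 1)`.  There exists a constant `c > 0` depending only on `ρ` such that
for all independent variables `X i` with mean `μ₁` and `X i − μ₁` 1-subgaussian, with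
`μ̂_s = (1/s)∑_{i=1}^s X_i` and
`G'_{1h(s)}(ε) = 1 − Φ(√(ρ·h(s))·(μ₁ − ε − μ̂_{h(s)}))`, for every `T ≥ 1` and `ε > 0`:
`E[∑_{s=1}^{T−1} (1/G'_{1h(s)}(ε) − 1)] ≤ c/ε²`. -/
theorem expected_inverse_tail_sum_le (ρ : ℝ) (hρ : ρ ∈ Set.Ioo (1/2 : ℝ) 1) :
    ∃ c : ℝ, 0 < c ∧
      ∀ (Ω : Type) [MeasureSpace Ω] [IsProbabilityMeasure (ℙ : Measure Ω)],
        ∀ (X : ℕ → Ω → ℝ), (∀ i, Measurable (X i)) →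
          iIndepFun X ℙ →
          ∀ μ₁ : ℝ, (∀ i, ∫ ω, X i ω ∂ℙ = μ₁) →
            (∀ i, ∀ l : ℝ, ∫ ω, Real.exp (l * (X i ω - μ₁)) ∂ℙ ≤ Real.exp (l ^ 2 / 2)) →
            ∀ T : ℕ, 1 ≤ T → ∀ ε : ℝ, 0 < ε →
              (∫ ω, ∑ s ∈ Finset.Icc 1 (T - 1),
                  (1 / (1 - stdGaussianCDF (Real.sqrt (ρ * (hpow s : ℝ)) *
                      (μ₁ - ε - (1 / (hpow s : ℝ)) * ∑ i ∈ Finset.Icc 1 (hpow s), X i ω))) - 1)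
                ∂ℙ)
              ≤ c / ε ^ 2 := by
  have hρ0 : 0 < ρ := by linarith [hρ.1]
  set A := √(2 * π) * exp (1 / 2 + 2 / (1 - ρ))
  refine ⟨6 * A / ρ, by positivity, ?_⟩
  intro Ω _ _ X hX hind μ₁ _ hmgf T _ ε hε
  let odds : ℕ → Ω → ℝ := fun s ω =>
    stdGaussianOdds (√(ρ * hpow s) * (μ₁ - ε - sampleMean X (hpow s) ω))
  change ∫ ω, ∑ s ∈ Icc 1 (T - 1), odds s ω ≤ _
  by_cases hF : Integrable (fun ω => ∑ s ∈ Icc 1 (T - 1), odds s ω)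
  swap
  · rw [integral_undef hF]; positivity
  have hterm : ∀ s ∈ Icc 1 (T - 1), Integrable (odds s) :=
    fun s => integrable_of_integrable_sum_of_nonneg (fun s _ => (measurable_stdGaussianOdds.comp
      (((measurable_sampleMean hX).const_sub _).const_mul _)).aestronglyMeasurable)
      (fun _ _ _ => stdGaussianOdds_nonneg _) hF
  calc ∫ ω, ∑ s ∈ Icc 1 (T - 1), odds s ω
      = ∑ s ∈ Icc 1 (T - 1), ∫ ω, odds s ω := integral_finsetSum _ hterm
    _ ≤ ∑ s ∈ Icc 1 (T - 1), A * exp (-(√(ρ / 2) * ε * √s)) :=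
        sum_le_sum fun s hs => (integral_stdGaussianOdds_sampleMean_le hX hind
          (fun i _ l _ => hmgf i l) ⟨hρ0, hρ.2⟩ hε.le Nat.one_le_two_pow (hterm s hs)).trans
          (mul_le_mul_of_nonneg_left (exp_neg_sqrt_mul_hpow_le hρ0.le hε.le s) (by positivity))
    _ = A * ∑ s ∈ Icc 1 (T - 1), exp (-(√(ρ / 2) * ε * √s)) := (mul_sum _ _ _).symm
    _ ≤ A * (3 / (√(ρ / 2) * ε) ^ 2) := by gcongr; exact sum_exp_neg_mul_sqrt_le (by positivity) _
    _ = 6 * A / ρ / ε ^ 2 := by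
        rw [mul_pow, sq_sqrt (by positivity)]
        field_simp
        ring
end

section
/- Fix ρ ∈ (1/2, 1). Let X₁, X₂, … be independent random variables with mean μ₁ such that X_i − μ₁ is 1-subgaussian, and let μ̂_s = (1/s)·Σ_{i=1}^{s} X_i. For s ≥ 1 let h(s) = 2^{⌊log₂ s⌋} and, for ε > 0, define the random variable G'_{1h(s)}(ε) = 1 − Φ(√(ρ·h(s))·(μ₁ − ε − μ̂_{h(s)})). Then there exists a constant c' > 0, depending only on ρ and independent of s, ε, and the distribution of the X_i, such that for every s ≥ 1 and every ε > 0, E[ 1/G'_{1h(s)}(ε) − 1 ] ≤ c'. -/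
open MeasureTheory ProbabilityTheory
open scoped ProbabilityTheory BigOperators

/-!
Write `n = h(s)`, `S = ∑_{i ≤ n} (μ₁ - X i)` and `A = √(ρ n) (μ₁ - ε - μ̂_n) = κ S - √(ρ n) ε` with
`κ² n = ρ`, so that `1 / G' = 1 / Φ̄(A)` where `Φ̄ = 1 - Φ`. The Chernoff bound for the
subgaussian sum `S` gives `P(A ≥ k) ≤ exp (-k² / (2ρ))`, and `1 / Φ̄(t) ≤ √(2π) exp ((t + 1)² / 2)`
for `t ≥ 0`. Slicing `Ω` along `⌊A⌋`,
`E[1 / Φ̄(A)] ≤ 1 / Φ̄(0) + ∑ₖ exp (-k² / (2ρ)) / Φ̄(k + 1)`,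
a series that converges because `ρ < 1` and does not depend on `n`, `ε` or the law of the `X i`.
-/

section GaussianTail

open Real Set

noncomputable def stdGaussianTail (x : ℝ) : ℝ := (gaussianReal 0 1).real (Ioi x)

lemma one_sub_stdGaussianCDF (x : ℝ) : 1 - stdGaussianCDF x = stdGaussianTail x := by
  rw [stdGaussianTail, ← compl_Iic, measureReal_compl measurableSet_Iic, probReal_univ]
  rfl

lemma stdGaussianTail_pos (x : ℝ) : 0 < stdGaussianTail x := by
  refine ENNReal.toReal_pos (fun h => ?_) (measure_ne_top _ _)
  have := gaussianReal_absolutelyContinuous' 0 one_ne_zero h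
  simp [volume_Ioi] at this

lemma stdGaussianTail_antitone : Antitone stdGaussianTail :=
  fun _ _ hab => measureReal_mono (Ioi_subset_Ioi hab)

lemma stdGaussianTail_le_exp {l : ℝ} (hl : 0 ≤ l) (x : ℝ) :
    stdGaussianTail x ≤ rexp (l ^ 2 / 2 - l * x) := by
  calc stdGaussianTail x ≤ (gaussianReal 0 1).real {y | x ≤ id y} :=
        measureReal_mono Ioi_subset_Ici_self
    _ ≤ rexp (-l * x) * mgf id (gaussianReal 0 1) l :=
        measure_ge_le_exp_mul_mgf x hl (integrable_exp_mul_gaussianReal l)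
    _ = rexp (l ^ 2 / 2 - l * x) := by
        rw [mgf_id_gaussianReal, ← exp_add]
        congr 1
        push_cast
        ring

/-- The tail beyond `t` contains the unit interval `(t, t + 1]`, on which the density is at
least its value at `t + 1`. -/
lemma inv_stdGaussianTail_le {t : ℝ} (ht : 0 ≤ t) :
    (stdGaussianTail t)⁻¹ ≤ √(2 * π) * rexp ((t + 1) ^ 2 / 2) := by
  have hdensity : ∀ z ∈ Ioc t (t + 1), gaussianPDFReal 0 1 (t + 1) ≤ gaussianPDFReal 0 1 z := by
    intro z hz
    simp only [gaussianPDFReal, NNReal.coe_one, mul_one, sub_zero]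
    gcongr
    · exact ht.trans hz.1.le
    · exact hz.2
  have hlower : gaussianPDFReal 0 1 (t + 1) ≤ stdGaussianTail t := by
    rw [stdGaussianTail, measureReal_def, gaussianReal_apply_eq_integral 0 one_ne_zero,
      ENNReal.toReal_ofReal (setIntegral_nonneg measurableSet_Ioi
        fun z _ => gaussianPDFReal_nonneg 0 1 z)]
    calc gaussianPDFReal 0 1 (t + 1) = ∫ _ in Ioc t (t + 1), gaussianPDFReal 0 1 (t + 1) := by
          simp
      _ ≤ ∫ z in Ioc t (t + 1), gaussianPDFReal 0 1 z :=
          setIntegral_mono_on (integrableOn_const measure_Ioc_lt_top.ne)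
            (integrable_gaussianPDFReal 0 1).integrableOn measurableSet_Ioc hdensity
      _ ≤ ∫ z in Ioi t, gaussianPDFReal 0 1 z :=
          setIntegral_mono_set (integrable_gaussianPDFReal 0 1).integrableOn
            (.of_forall fun z => gaussianPDFReal_nonneg 0 1 z) (.of_forall Ioc_subset_Ioi_self)
  calc (stdGaussianTail t)⁻¹ ≤ (gaussianPDFReal 0 1 (t + 1))⁻¹ :=
        inv_anti₀ (gaussianPDFReal_pos 0 1 _ one_ne_zero) hlower
    _ = √(2 * π) * rexp ((t + 1) ^ 2 / 2) := by
        simp [gaussianPDFReal, ← exp_neg, neg_div, mul_comm]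

lemma summable_exp_neg_mul_sq_add_mul {a : ℝ} (ha : 0 < a) (b : ℝ) :
    Summable fun k : ℕ => rexp (-a * k ^ 2 + b * k) := by
  refine (summable_exp_neg_nat.mul_left (rexp ((b + 1) ^ 2 / (4 * a)))).of_nonneg_of_le
    (fun _ => (exp_pos _).le) fun k => ?_
  rw [← exp_add, exp_le_exp, div_add' _ _ _ (by positivity), le_div_iff₀ (by positivity)]
  nlinarith [sq_nonneg (2 * a * k - (b + 1))]

lemma summable_inv_stdGaussianTail_mul_exp {ρ : ℝ} (hρ0 : 0 < ρ) (hρ1 : ρ < 1) :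
    Summable fun k : ℕ => (stdGaussianTail (k + 1))⁻¹ * rexp (-k ^ 2 / (2 * ρ)) := by
  have hδ : 0 < 1 / (2 * ρ) - 1 / 2 := by
    rw [sub_pos]
    gcongr
    linarith
  refine ((summable_exp_neg_mul_sq_add_mul hδ 2).mul_left (√(2 * π) * rexp 2)).of_nonneg_of_le
    (fun _ => mul_nonneg (inv_nonneg.2 (stdGaussianTail_pos _).le) (exp_pos _).le) fun k => ?_
  calc (stdGaussianTail (k + 1))⁻¹ * rexp (-k ^ 2 / (2 * ρ))
      ≤ √(2 * π) * rexp ((k + 1 + 1) ^ 2 / 2) * rexp (-k ^ 2 / (2 * ρ)) := by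
        gcongr
        exact inv_stdGaussianTail_le (by positivity)
    _ = √(2 * π) * rexp 2 * rexp (-(1 / (2 * ρ) - 1 / 2) * k ^ 2 + 2 * k) := by
        rw [mul_assoc, mul_assoc, ← exp_add, ← exp_add]
        congr 2
        field_simp
        ring

noncomputable def invTailConst (ρ : ℝ) : ℝ :=
  (stdGaussianTail 0)⁻¹ + ∑' k : ℕ, (stdGaussianTail (k + 1))⁻¹ * rexp (-k ^ 2 / (2 * ρ))

lemma invTailConst_pos (ρ : ℝ) : 0 < invTailConst ρ :=
  add_pos_of_pos_of_nonneg (inv_pos.2 (stdGaussianTail_pos 0))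
    (tsum_nonneg fun _ => mul_nonneg (inv_nonneg.2 (stdGaussianTail_pos _).le) (exp_pos _).le)

end GaussianTail

section TailBounds

open Real

variable {Ω : Type*} [MeasurableSpace Ω] {μ : Measure Ω}

/-- A discrete layer-cake bound: on `{k ≤ A < k + 1}` the value `g A` is at most `g (k + 1)`. -/
lemma lintegral_ofReal_comp_le_tsum {g : ℝ → ℝ} (hg : Monotone g) {A : Ω → ℝ}
    (hA : Measurable A) :
    ∫⁻ ω, ENNReal.ofReal (g (A ω)) ∂μ ≤
      ENNReal.ofReal (g 0) * μ Set.univ +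
        ∑' k : ℕ, ENNReal.ofReal (g (k + 1)) * μ {ω | (k : ℝ) ≤ A ω} := by
  have hmeas (k : ℕ) : MeasurableSet {ω | (k : ℝ) ≤ A ω} :=
    measurableSet_le measurable_const hA
  have hpointwise (ω : Ω) : ENNReal.ofReal (g (A ω)) ≤ ENNReal.ofReal (g 0) +
      ∑' k : ℕ, {ω | (k : ℝ) ≤ A ω}.indicator (fun _ => ENNReal.ofReal (g (k + 1))) ω := by
    rcases le_or_gt (A ω) 0 with hneg | hpos
    · exact le_add_right (ENNReal.ofReal_le_ofReal (hg hneg))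
    · refine le_add_left (le_trans ?_ (ENNReal.le_tsum ⌊A ω⌋₊))
      have hfloor : ω ∈ {ω' | (⌊A ω⌋₊ : ℝ) ≤ A ω'} := Nat.floor_le hpos.le
      rw [Set.indicator_of_mem hfloor]
      exact ENNReal.ofReal_le_ofReal (hg (Nat.lt_floor_add_one _).le)
  calc ∫⁻ ω, ENNReal.ofReal (g (A ω)) ∂μ
      ≤ ∫⁻ ω, ENNReal.ofReal (g 0) +
          ∑' k : ℕ, {ω | (k : ℝ) ≤ A ω}.indicator (fun _ => ENNReal.ofReal (g (k + 1))) ω ∂μ :=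
        lintegral_mono hpointwise
    _ = _ := by
        rw [lintegral_add_left measurable_const, lintegral_const,
          lintegral_tsum fun k => (measurable_const.indicator (hmeas k)).aemeasurable]
        simp_rw [lintegral_indicator_const (hmeas _)]

lemma integral_inv_stdGaussianTail_le [IsProbabilityMeasure μ] {ρ : ℝ} (hρ0 : 0 < ρ)
    (hρ1 : ρ < 1) {A : Ω → ℝ} (hA : Measurable A)
    (htail : ∀ k : ℕ, μ.real {ω | (k : ℝ) ≤ A ω} ≤ rexp (-k ^ 2 / (2 * ρ))) :
    ∫ ω, (stdGaussianTail (A ω))⁻¹ ∂μ ≤ invTailConst ρ := by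
  have hsum := summable_inv_stdGaussianTail_mul_exp hρ0 hρ1
  have hterm_nonneg (k : ℕ) : 0 ≤ (stdGaussianTail (k + 1))⁻¹ * rexp (-k ^ 2 / (2 * ρ)) :=
    mul_nonneg (inv_nonneg.2 (stdGaussianTail_pos _).le) (exp_pos _).le
  rw [integral_eq_lintegral_of_nonneg_ae
    (.of_forall fun ω => inv_nonneg.2 (stdGaussianTail_pos _).le)
    (stdGaussianTail_antitone.measurable.comp hA).inv.aestronglyMeasurable]
  refine ENNReal.toReal_le_of_le_ofReal (invTailConst_pos ρ).le ?_
  calc ∫⁻ ω, ENNReal.ofReal (stdGaussianTail (A ω))⁻¹ ∂μ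
      ≤ ENNReal.ofReal (stdGaussianTail 0)⁻¹ * μ Set.univ + ∑' k : ℕ,
          ENNReal.ofReal (stdGaussianTail (k + 1))⁻¹ * μ {ω | (k : ℝ) ≤ A ω} :=
        lintegral_ofReal_comp_le_tsum
          (fun _ _ hab => inv_anti₀ (stdGaussianTail_pos _) (stdGaussianTail_antitone hab)) hA
    _ ≤ ENNReal.ofReal (stdGaussianTail 0)⁻¹ + ∑' k : ℕ,
          ENNReal.ofReal ((stdGaussianTail (k + 1))⁻¹ * rexp (-k ^ 2 / (2 * ρ))) := by
        rw [measure_univ, mul_one]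
        gcongr with k
        rw [ENNReal.ofReal_mul (inv_nonneg.2 (stdGaussianTail_pos _).le)]
        gcongr
        exact (ENNReal.le_ofReal_iff_toReal_le (measure_ne_top _ _) (exp_pos _).le).2
          (htail k)
    _ = ENNReal.ofReal (invTailConst ρ) := by
        rw [invTailConst, ENNReal.ofReal_add (inv_pos.2 (stdGaussianTail_pos 0)).le
          (tsum_nonneg hterm_nonneg), ENNReal.ofReal_tsum_of_nonneg hterm_nonneg hsum]

/-- If `1 / Φ̄(A)` is not integrable, its Bochner integral is `0`; so only the integrable case
needs the tail bound. -/
lemma integral_inv_stdGaussianTail_sub_one_le [IsProbabilityMeasure μ] {ρ : ℝ} (hρ0 : 0 < ρ)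
    (hρ1 : ρ < 1) {A : Ω → ℝ} (hA : Measurable A)
    (htail : Integrable (fun ω => (stdGaussianTail (A ω))⁻¹) μ →
      ∀ k : ℕ, μ.real {ω | (k : ℝ) ≤ A ω} ≤ rexp (-k ^ 2 / (2 * ρ))) :
    ∫ ω, ((stdGaussianTail (A ω))⁻¹ - 1) ∂μ ≤ invTailConst ρ := by
  by_cases hint : Integrable (fun ω => (stdGaussianTail (A ω))⁻¹) μ
  · calc ∫ ω, ((stdGaussianTail (A ω))⁻¹ - 1) ∂μ ≤ ∫ ω, (stdGaussianTail (A ω))⁻¹ ∂μ :=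
          integral_mono (hint.sub (integrable_const 1)) hint fun ω => by simp
      _ ≤ invTailConst ρ := integral_inv_stdGaussianTail_le hρ0 hρ1 hA (htail hint)
  · rw [integral_undef fun h =>
      hint ((h.add (integrable_const 1)).congr (.of_forall fun _ => sub_add_cancel _ _))]
    exact (invTailConst_pos ρ).le

lemma measureReal_sum_ge_le_of_mgf_le {ι : Type*} {Y : ι → Ω → ℝ} (hindep : iIndepFun Y μ)
    (hmeas : ∀ i, Measurable (Y i)) (s : Finset ι)
    (hmgf : ∀ i ∈ s, ∀ t, 0 ≤ t → mgf (Y i) μ t ≤ rexp (t ^ 2 / 2))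
    (hint : ∀ t, 0 ≤ t → Integrable (fun ω => rexp (t * (∑ i ∈ s, Y i) ω)) μ)
    {a : ℝ} (ha : 0 ≤ a) :
    μ.real {ω | a ≤ (∑ i ∈ s, Y i) ω} ≤ rexp (-a ^ 2 / (2 * s.card)) := by
  have := hindep.isProbabilityMeasure
  have ht : 0 ≤ a / s.card := by positivity
  calc μ.real {ω | a ≤ (∑ i ∈ s, Y i) ω}
      ≤ rexp (-(a / s.card) * a) * mgf (∑ i ∈ s, Y i) μ (a / s.card) :=
        measure_ge_le_exp_mul_mgf a ht (hint _ ht)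
    _ ≤ rexp (-(a / s.card) * a) * ∏ _i ∈ s, rexp ((a / s.card) ^ 2 / 2) := by
        rw [hindep.mgf_sum hmeas]
        gcongr with i hi
        · exact fun i _ => mgf_nonneg
        · exact hmgf i hi _ ht
    _ = rexp (-a ^ 2 / (2 * s.card)) := by
        rw [Finset.prod_const, ← exp_nat_mul, ← exp_add]
        congr 1
        rcases eq_or_ne (s.card : ℝ) 0 with h | h
        · simp [h]
        · field_simp
          ring

lemma integrable_exp_mul_of_integrable_inv_stdGaussianTail {A : Ω → ℝ} (hA : Measurable A)
    (hint : Integrable (fun ω => (stdGaussianTail (A ω))⁻¹) μ) {l : ℝ} (hl : 0 ≤ l) :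
    Integrable (fun ω => rexp (l * A ω)) μ := by
  refine (hint.const_mul (rexp (l ^ 2 / 2))).mono' (by fun_prop) (.of_forall fun ω => ?_)
  rw [norm_of_nonneg (exp_pos _).le]
  calc rexp (l * A ω) = rexp (l ^ 2 / 2) * (rexp (l ^ 2 / 2 - l * A ω))⁻¹ := by
        rw [← exp_neg, ← exp_add]
        ring_nf
    _ ≤ rexp (l ^ 2 / 2) * (stdGaussianTail (A ω))⁻¹ := by
        gcongr
        · exact stdGaussianTail_pos _
        · exact stdGaussianTail_le_exp hl _

/-- Integrability of `1 / Φ̄(κ S - b)` forces every exponential moment `E[exp (t S)]`, `t ≥ 0`,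
to be finite, which is what the Chernoff bound needs. -/
lemma measureReal_mul_sum_sub_ge_le {ι : Type*} {Y : ι → Ω → ℝ} (hindep : iIndepFun Y μ)
    (hmeas : ∀ i, Measurable (Y i)) (s : Finset ι)
    (hmgf : ∀ i ∈ s, ∀ t, 0 ≤ t → mgf (Y i) μ t ≤ rexp (t ^ 2 / 2))
    {κ b : ℝ} (hκ : 0 < κ) (hb : 0 ≤ b)
    (hint : Integrable (fun ω => (stdGaussianTail (κ * (∑ i ∈ s, Y i) ω - b))⁻¹) μ)
    {k : ℝ} (hk : 0 ≤ k) :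
    μ.real {ω | k ≤ κ * (∑ i ∈ s, Y i) ω - b} ≤ rexp (-k ^ 2 / (2 * (κ ^ 2 * s.card))) := by
  have := hindep.isProbabilityMeasure
  have hexp (t : ℝ) (ht : 0 ≤ t) : Integrable (fun ω => rexp (t * (∑ i ∈ s, Y i) ω)) μ := by
    have := (integrable_exp_mul_of_integrable_inv_stdGaussianTail (by fun_prop) hint
      (div_nonneg ht hκ.le)).const_mul (rexp (t * b / κ))
    refine this.congr (.of_forall fun ω => ?_)
    dsimp only
    rw [← exp_add]
    congr 1
    field_simp
    ring
  calc μ.real {ω | k ≤ κ * (∑ i ∈ s, Y i) ω - b}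
      ≤ μ.real {ω | k / κ ≤ (∑ i ∈ s, Y i) ω} := by
        refine measureReal_mono (fun ω hω => ?_)
        simp only [Set.mem_ofPred_eq] at hω ⊢
        rw [div_le_iff₀' hκ]
        linarith
    _ ≤ rexp (-(k / κ) ^ 2 / (2 * s.card)) :=
        measureReal_sum_ge_le_of_mgf_le hindep hmeas s hmgf hexp (by positivity)
    _ = rexp (-k ^ 2 / (2 * (κ ^ 2 * s.card))) := by
        congr 1
        field_simp

lemma mgf_const_sub_le_of_subgaussian {X : Ω → ℝ} {m : ℝ}
    (h : ∀ l : ℝ, ∫ ω, rexp (l * (X ω - m)) ∂μ ≤ rexp (l ^ 2 / 2)) (t : ℝ) :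
    mgf (fun ω => m - X ω) μ t ≤ rexp (t ^ 2 / 2) := by
  have hneg : (fun ω => rexp (t * (m - X ω))) = fun ω => rexp (-t * (X ω - m)) := by
    ext ω
    congr 1
    ring
  rw [mgf, hneg, ← neg_sq]
  exact h (-t)

end TailBounds

/-- Fix `ρ ∈ (1/2, 1)`.  There exists a constant `c' > 0` depending only on `ρ` —
independent of `s`, `ε`, and the distribution of the `X i` — such that for all independent
variables `X i` with mean `μ₁` and `X i − μ₁` 1-subgaussian, with
`μ̂_s = (1/s)∑_{i=1}^s X_i` and
`G'_{1h(s)}(ε) = 1 − Φ(√(ρ·h(s))·(μ₁ − ε − μ̂_{h(s)}))`, for every `s ≥ 1` and `ε > 0`: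
`E[1/G'_{1h(s)}(ε) − 1] ≤ c'`. -/
theorem expected_inverse_tail_le_const (ρ : ℝ) (hρ : ρ ∈ Set.Ioo (1/2 : ℝ) 1) :
    ∃ c' : ℝ, 0 < c' ∧
      ∀ (Ω : Type) [MeasureSpace Ω] [IsProbabilityMeasure (ℙ : Measure Ω)],
        ∀ (X : ℕ → Ω → ℝ), (∀ i, Measurable (X i)) →
          iIndepFun (m := fun _ => Real.measurableSpace) X ℙ →
          ∀ μ₁ : ℝ, (∀ i, ∫ ω, X i ω ∂ℙ = μ₁) →
            (∀ i, ∀ l : ℝ, ∫ ω, Real.exp (l * (X i ω - μ₁)) ∂ℙ ≤ Real.exp (l ^ 2 / 2)) →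
            ∀ s : ℕ, 1 ≤ s → ∀ ε : ℝ, 0 < ε →
              (∫ ω, (1 / (1 - stdGaussianCDF (Real.sqrt (ρ * (hpow s : ℝ)) *
                    (μ₁ - ε - (1 / (hpow s : ℝ)) * ∑ i ∈ Finset.Icc 1 (hpow s), X i ω))) - 1)
                ∂ℙ)
              ≤ c' := by
  obtain ⟨hρl, hρu⟩ := hρ
  have hρ0 : 0 < ρ := by linarith
  refine ⟨invTailConst ρ, invTailConst_pos ρ,
    fun Ω _ _ X hXmeas hindep μ₁ _ hsubG s _ ε hε => ?_⟩
  set n := hpow s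
  have hn : (0 : ℝ) < n := Nat.cast_pos.2 (pow_pos two_pos _)
  let Y : ℕ → Ω → ℝ := fun i ω => μ₁ - X i ω
  have hYmeas (i : ℕ) : Measurable (Y i) := measurable_const.sub (hXmeas i)
  have hYindep : iIndepFun Y ℙ := hindep.comp _ fun _ => measurable_const.sub measurable_id
  set κ := √(ρ * n) / n
  have hκn : κ ^ 2 * (Finset.Icc 1 n).card = ρ := by
    rw [Nat.card_Icc, Nat.add_sub_cancel, div_pow, Real.sq_sqrt (by positivity)]
    field_simp
  have hA (ω : Ω) : √(ρ * n) * (μ₁ - ε - 1 / n * ∑ i ∈ Finset.Icc 1 n, X i ω) =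
      κ * (∑ i ∈ Finset.Icc 1 n, Y i) ω - √(ρ * n) * ε := by
    simp only [Finset.sum_apply, Y, Finset.sum_sub_distrib, Finset.sum_const, Nat.card_Icc,
      Nat.add_sub_cancel, nsmul_eq_mul, κ]
    field_simp
    ring
  simp_rw [hA, one_sub_stdGaussianCDF, one_div]
  exact integral_inv_stdGaussianTail_sub_one_le hρ0 hρu (by fun_prop) fun hint k =>
    hκn ▸ measureReal_mul_sum_sub_ge_le hYindep hYmeas _
      (fun i _ t _ => mgf_const_sub_le_of_subgaussian (hsubG i) t) (by positivity)
      (by positivity) hint k.cast_nonneg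
end

section
/- Let ρ' ∈ (0,1), let m ∈ ℝ and σ > 0, and let r be an integer with r ≥ exp(10/(1−ρ')²). Let M_r be the maximum of r independent Gaussian random variables with mean m and variance σ², and set z = √(2ρ'·ln r). Then P( M_r > m + z·σ ) ≥ 1 − 1/r². -/
/-! If `p` is the Gaussian tail beyond `t = m + zσ`, then by independence the maximum stays
below `t` with probability `(1 - p)^r ≤ exp (-r p)`. Bounding the density from below on
`[t, t + σ]` gives `p ≥ φ(z + 1)` for the standard density `φ`, and the size of `r` makes
`φ(z + 1) ≥ 2 log r / r`, so `(1 - p)^r ≤ r⁻²`. -/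

open MeasureTheory ProbabilityTheory Real Set
open scoped ProbabilityTheory NNReal

section IidMaximum

variable {Ω ι : Type*} [MeasurableSpace Ω] {μ : Measure Ω} [IsProbabilityMeasure μ]
  [Fintype ι] [Nonempty ι] {X : ι → Ω → ℝ}

lemma measureReal_lt_iSup_eq_one_sub_pow (hmeas : ∀ i, Measurable (X i))
    (hindep : iIndepFun X μ) {ν : Measure ℝ} (hlaw : ∀ i, μ.map (X i) = ν) (t : ℝ) :
    μ.real {ω | t < ⨆ i, X i ω} = 1 - ν.real (Iic t) ^ Fintype.card ι := by
  have hcompl : {ω | t < ⨆ i, X i ω}ᶜ = ⋂ i, X i ⁻¹' Iic t := by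
    ext ω
    simpa using ciSup_le_iff (Finite.bddAbove_range fun i => X i ω)
  have hinter : μ.real (⋂ i, X i ⁻¹' Iic t) = ν.real (Iic t) ^ Fintype.card ι := by
    have hmarginal (i : ι) : μ (X i ⁻¹' Iic t) = ν (Iic t) := by
      rw [← hlaw i, Measure.map_apply (hmeas i) measurableSet_Iic]
    simp [measureReal_def, hindep.meas_iInter fun i => ⟨Iic t, measurableSet_Iic, rfl⟩,
      hmarginal]
  rw [← hinter, ← hcompl, probReal_compl_eq_one_sub, sub_sub_cancel]
  exact measurableSet_lt measurable_const (Measurable.iSup hmeas)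

end IidMaximum

section GaussianTail

lemma gaussianPDFReal_antitoneOn (m : ℝ) (v : ℝ≥0) :
    AntitoneOn (gaussianPDFReal m v) (Ici m) := by
  intro x hx y hy hxy
  simp only [gaussianPDFReal]
  gcongr
  exact sub_nonneg.2 hx

lemma sub_mul_gaussianPDFReal_le_gaussianReal_Ioi (m : ℝ) {v : ℝ≥0} (hv : v ≠ 0) {a b : ℝ}
    (hma : m ≤ a) (hab : a ≤ b) :
    (b - a) * gaussianPDFReal m v b ≤ (gaussianReal m v).real (Ioi a) := by
  have hint := integrable_gaussianPDFReal m v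
  have hpdf : ∀ x ∈ Ioc a b, gaussianPDFReal m v b ≤ gaussianPDFReal m v x := fun x hx =>
    gaussianPDFReal_antitoneOn m v (hma.trans hx.1.le) (hma.trans (hx.1.le.trans hx.2)) hx.2
  calc (b - a) * gaussianPDFReal m v b
      = gaussianPDFReal m v b * volume.real (Ioc a b) := by
        rw [Real.volume_real_Ioc_of_le hab, mul_comm]
    _ ≤ ∫ x in Ioc a b, gaussianPDFReal m v x :=
        setIntegral_ge_of_const_le_real measurableSet_Ioc measure_Ioc_lt_top.ne hpdf
          hint.integrableOn
    _ ≤ ∫ x in Ioi a, gaussianPDFReal m v x :=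
        setIntegral_mono_set hint.integrableOn
          (ae_of_all _ (gaussianPDFReal_nonneg m v)) (ae_of_all _ Ioc_subset_Ioi_self)
    _ = (gaussianReal m v).real (Ioi a) := by
        rw [measureReal_def, gaussianReal_apply_eq_integral m hv, ENNReal.toReal_ofReal
          (setIntegral_nonneg measurableSet_Ioi fun x _ => gaussianPDFReal_nonneg m v x)]

lemma sqrt_mul_gaussianPDFReal_add_mul_sqrt (m y : ℝ) {v : ℝ≥0} (hv : v ≠ 0) :
    √v * gaussianPDFReal m v (m + y * √v) = gaussianPDFReal 0 1 y := by
  have hv0 : (0 : ℝ) < v := by positivity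
  simp only [gaussianPDFReal, NNReal.coe_one, mul_one, sub_zero, add_sub_cancel_left,
    Real.sqrt_mul' _ hv0.le, mul_pow, Real.sq_sqrt hv0.le]
  field_simp

lemma mul_gaussianPDFReal_le_gaussianReal_Ioi (m : ℝ) {v : ℝ≥0} (hv : v ≠ 0) {z a : ℝ}
    (hz : 0 ≤ z) (ha : 0 ≤ a) :
    a * gaussianPDFReal 0 1 (z + a) ≤ (gaussianReal m v).real (Ioi (m + z * √v)) := by
  have hσ := Real.sqrt_nonneg v
  calc a * gaussianPDFReal 0 1 (z + a)
      = (m + (z + a) * √v - (m + z * √v)) * gaussianPDFReal m v (m + (z + a) * √v) := by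
        rw [← sqrt_mul_gaussianPDFReal_add_mul_sqrt m _ hv]; ring
    _ ≤ _ := sub_mul_gaussianPDFReal_le_gaussianReal_Ioi m hv (by nlinarith) (by nlinarith)

end GaussianTail

lemma nine_mul_sq_le_exp {u : ℝ} (hu : 3 ≤ u) : 9 * u ^ 2 ≤ exp (17 / 10 * u) := by
  have hcubic := sum_le_exp_of_nonneg (x := 17 / 20 * u) (by linarith) 4
  simp only [Finset.sum_range_succ, Finset.sum_range_zero, Nat.factorial] at hcubic
  norm_num at hcubic
  have h3u : 3 * u ≤ exp (17 / 20 * u) := by nlinarith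
  calc 9 * u ^ 2 = (3 * u) ^ 2 := by ring
    _ ≤ exp (17 / 20 * u) ^ 2 := by gcongr
    _ = exp (17 / 10 * u) := by rw [← exp_nat_mul]; ring_nf

lemma two_mul_sqrt_two_pi_le : 2 * √(2 * π) ≤ 9 * exp (-(1 / 2)) := by
  have hsq : √(2 * π) ^ 2 = 2 * π := sq_sqrt (by positivity)
  have hexp : exp (-(1 / 2)) ^ 2 = exp (-1) := by rw [← exp_nat_mul]; norm_num
  nlinarith [pi_lt_d2, exp_neg_one_gt_d9, sqrt_nonneg (2 * π), exp_pos (-(1 / 2))]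

lemma seventeen_div_ten_le_sqrt_ten_sub_sqrt_two : 17 / 10 ≤ √10 - √2 := by
  have h10 : 3.15 ≤ √10 := le_sqrt_of_sq_le (by norm_num)
  have h2 : √2 ≤ 1.45 := sqrt_le_iff.2 ⟨by norm_num, by norm_num⟩
  linarith

lemma two_mul_mul_exp_neg_le_gaussianPDFReal {ρ L : ℝ} (hρ0 : 0 ≤ ρ) (hρ1 : ρ < 1)
    (hL : 10 ≤ (1 - ρ) ^ 2 * L) :
    2 * L * exp (-L) ≤ gaussianPDFReal 0 1 (√(2 * ρ * L) + 1) := by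
  have hL10 : 10 ≤ L := by
    have hL0 : 0 < L := pos_of_mul_pos_right (by linarith) (sq_nonneg (1 - ρ))
    nlinarith [mul_le_mul_of_nonneg_right (by nlinarith : (1 - ρ) ^ 2 ≤ 1) hL0.le]
  set u := √L
  set z := √(2 * ρ * L)
  have hLu : L = u ^ 2 := (sq_sqrt (by linarith)).symm
  have hu : 3 ≤ u := le_sqrt_of_sq_le (by linarith)
  have hz_sq : z ^ 2 = 2 * ρ * L := sq_sqrt (by positivity)
  have hz_le : z ≤ √2 * u := by
    rw [← sqrt_mul zero_le_two]; exact sqrt_le_sqrt (by nlinarith)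
  have hgap : √10 * u ≤ (1 - ρ) * L := by
    rw [← sqrt_mul (by norm_num), ← sqrt_sq (by nlinarith : 0 ≤ (1 - ρ) * L)]
    exact sqrt_le_sqrt (by nlinarith)
  -- `(z + 1)² / 2 = ρ L + z + 1/2` with `z ≤ √(2L)`; the margin `(1 - ρ) L ≥ √(10 L)` absorbs `z`.
  have hexponent : 17 / 10 * u - 1 / 2 ≤ L - (z + 1) ^ 2 / 2 := by
    nlinarith [mul_le_mul_of_nonneg_right seventeen_div_ten_le_sqrt_ten_sub_sqrt_two
      (by linarith : 0 ≤ u)]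
  have key : √(2 * π) * (2 * L) ≤ exp (L - (z + 1) ^ 2 / 2) := calc
    √(2 * π) * (2 * L) = 2 * √(2 * π) * u ^ 2 := by rw [hLu]; ring
    _ ≤ 9 * exp (-(1 / 2)) * u ^ 2 :=
        mul_le_mul_of_nonneg_right two_mul_sqrt_two_pi_le (sq_nonneg u)
    _ ≤ exp (-(1 / 2)) * exp (17 / 10 * u) := by
        nlinarith [nine_mul_sq_le_exp hu, exp_pos (-(1 / 2))]
    _ = exp (17 / 10 * u - 1 / 2) := by rw [← exp_add]; ring_nf
    _ ≤ exp (L - (z + 1) ^ 2 / 2) := exp_le_exp.2 hexponent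
  simp only [gaussianPDFReal, NNReal.coe_one, mul_one, sub_zero]
  rw [le_inv_mul_iff₀ (by positivity), ← mul_assoc,
    show -(z + 1) ^ 2 / 2 = (L - (z + 1) ^ 2 / 2) + -L by ring, exp_add]
  exact mul_le_mul_of_nonneg_right key (exp_pos _).le

lemma one_sub_pow_le_one_div_sq {n : ℕ} (hn : 0 < n) {p : ℝ} (hp : p ≤ 1)
    (hnp : 2 * log n ≤ n * p) : (1 - p) ^ n ≤ 1 / n ^ 2 := by
  have hn' : (0 : ℝ) < n := by exact_mod_cast hn
  calc (1 - p) ^ n = (1 - n * p / n) ^ n := by rw [mul_div_cancel_left₀ _ hn'.ne']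
    _ ≤ exp (-(n * p)) := one_sub_div_pow_le_exp_neg (by nlinarith)
    _ ≤ exp (-(2 * log n)) := by gcongr
    _ = 1 / n ^ 2 := by
        rw [show 2 * log n = log ((n : ℝ) ^ 2) by rw [log_pow]; norm_num, exp_neg,
          exp_log (by positivity), one_div]

/-- Lower bound on the maximum of `r` i.i.d. Gaussian samples: if
`r ≥ exp(10/(1−ρ')²)` for some `ρ' ∈ (0,1)`, `M_r` is the maximum of `r` independent
samples from `N(m, σ²)` with `σ = √v > 0`, and `z = √(2ρ'·ln r)`, then
`P(M_r > m + z·σ) ≥ 1 − 1/r²`. -/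
theorem max_gaussian_samples_exceeds {Ω : Type*} [MeasureSpace Ω]
    [IsProbabilityMeasure (ℙ : Measure Ω)]
    (ρ' : ℝ) (hρ' : ρ' ∈ Set.Ioo (0:ℝ) 1) (m : ℝ) (v : ℝ≥0) (hv : v ≠ 0)
    (r : ℕ) (hr : Real.exp (10 / (1 - ρ') ^ 2) ≤ (r : ℝ))
    (X : Fin r → Ω → ℝ) (hmeas : ∀ i, Measurable (X i))
    (hindep : iIndepFun X ℙ)
    (hlaw : ∀ i, Measure.map (X i) ℙ = gaussianReal m v) :
    1 - 1 / (r : ℝ) ^ 2 ≤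
      (ℙ {ω | m + Real.sqrt (2 * ρ' * Real.log r) * Real.sqrt (v : ℝ) <
          ⨆ i : Fin r, X i ω}).toReal := by
  obtain ⟨hρ0, hρ1⟩ := hρ'
  have hr0 : 0 < r := by exact_mod_cast (exp_pos _).trans_le hr
  have : Nonempty (Fin r) := Fin.pos_iff_nonempty.mp hr0
  have hL : 10 ≤ (1 - ρ') ^ 2 * log r := by
    rw [← div_le_iff₀' (by nlinarith)]
    exact (le_log_iff_exp_le (by positivity)).2 hr
  set p := (gaussianReal m v).real (Ioi (m + √(2 * ρ' * log r) * √v))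
  have hp : 2 * log r ≤ r * p := by
    have htail := mul_gaussianPDFReal_le_gaussianReal_Ioi m hv (sqrt_nonneg (2 * ρ' * log r))
      zero_le_one
    rw [one_mul] at htail
    have h := (two_mul_mul_exp_neg_le_gaussianPDFReal hρ0.le hρ1 hL).trans htail
    rwa [exp_neg, exp_log (by positivity), ← div_eq_mul_inv, div_le_iff₀' (by positivity)] at h
  rw [← measureReal_def, measureReal_lt_iSup_eq_one_sub_pow hmeas hindep hlaw, Fintype.card_fin,
    ← compl_Ioi, probReal_compl_eq_one_sub measurableSet_Ioi]
  linarith [one_sub_pow_le_one_div_sq hr0 measureReal_le_one hp]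
end

section
/- Let ε > 0 and let s be a positive integer, and let f be the probability density function of the Gaussian distribution N(0, 1/s), i.e., f(x) = √(s/(2π))·exp(−s·x²/2). Then ∫_{−∞}^{−ε} f(x)·2·exp( s·(ε + x)²/2 ) dx ≤ √2 · exp(−s·ε²/4) / (√s · ε). -/
/-!
Completing the square, the Gaussian density times `exp (s (ε + x)² / 2)` is a pure exponential
`exp (s ε² / 2 + s ε x)`, whose integral over `(-∞, -ε]` is explicit and equals
`√(2/π) · exp (-s ε² / 2) / (√s ε)`. The bound then follows from `√(2/π) ≤ √2` and
`exp (-s ε² / 2) ≤ exp (-s ε² / 4)`.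
-/

open MeasureTheory Real

theorem integral_Iic_gaussian_mul_exp_sq_add {s ε : ℝ} (hs : 0 < s) (hε : 0 < ε) :
    ∫ x in Set.Iic (-ε), (√(s / (2 * π)) * exp (-s * x ^ 2 / 2)) * (2 * exp (s * (ε + x) ^ 2 / 2))
      = √(2 / π) * exp (-s * ε ^ 2 / 2) / (√s * ε) := by
  have h_integrand : ∀ x : ℝ,
      (√(s / (2 * π)) * exp (-s * x ^ 2 / 2)) * (2 * exp (s * (ε + x) ^ 2 / 2))
        = (2 * √(s / (2 * π)) * exp (s * ε ^ 2 / 2)) * exp (s * ε * x) := by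
    intro x
    calc _ = 2 * √(s / (2 * π)) * exp (-s * x ^ 2 / 2 + s * (ε + x) ^ 2 / 2) := by
          rw [exp_add]; ring
      _ = _ := by rw [mul_assoc (2 * _), ← exp_add]; congr 2; ring
  have h_const : 2 * √(s / (2 * π)) = √(2 / π) * √s := by
    rw [← sqrt_mul (by positivity), ← sqrt_sq (zero_le_two : (0 : ℝ) ≤ 2), ← sqrt_mul (by norm_num)]
    congr 1
    field_simp
    ring
  have hs_sqrt : s = √s * √s := (mul_self_sqrt hs.le).symm
  simp_rw [h_integrand]
  rw [integral_const_mul, integral_exp_mul_Iic (by positivity), h_const]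
  calc _ = √(2 / π) * √s * exp (s * ε ^ 2 / 2 + s * ε * -ε) / (√s * √s * ε) := by
        rw [exp_add, ← hs_sqrt]; ring
    _ = _ := by
        have hs_sqrt_pos : 0 < √s := sqrt_pos.mpr hs
        field_simp
        ring_nf

/-- For `ε > 0` and a positive integer `s`, with `f` the density of `N(0, 1/s)`,
`∫_{−∞}^{−ε} f(x)·2·exp(s·(ε+x)²/2) dx ≤ √2·exp(−s·ε²/4)/(√s·ε)`. -/
theorem gaussian_integral_inverse_tail_bound (ε : ℝ) (hε : 0 < ε) (s : ℕ) (hs : 0 < s) :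
    (∫ x in Set.Iic (-ε),
        (Real.sqrt ((s : ℝ) / (2 * Real.pi)) * Real.exp (-(s : ℝ) * x ^ 2 / 2)) *
          (2 * Real.exp ((s : ℝ) * (ε + x) ^ 2 / 2)))
      ≤ Real.sqrt 2 * Real.exp (-(s : ℝ) * ε ^ 2 / 4) / (Real.sqrt (s : ℝ) * ε) := by
  have hs' : (0 : ℝ) < s := Nat.cast_pos.mpr hs
  rw [integral_Iic_gaussian_mul_exp_sq_add hs' hε]
  have h_sqrt : √(2 / π) ≤ √2 :=
    sqrt_le_sqrt (div_le_self zero_le_two (by linarith [pi_gt_three]))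
  have h_exp : exp (-s * ε ^ 2 / 2) ≤ exp (-s * ε ^ 2 / 4) :=
    exp_le_exp.mpr (by nlinarith [mul_pos hs' (pow_pos hε 2)])
  gcongr
end

section
/- Let d ≥ 1 and T ≥ 2 be integers, and let b₁, …, b_T ∈ ℝ^d be vectors with ‖b_t‖₂ ≤ 1 for all t. Define M_t = I_d + Σ_{τ=1}^{t−1} b_τ·b_τᵀ (so M₁ = I_d). Then Σ_{t=1}^{T} √( b_tᵀ · M_t^{−1} · b_t ) ≤ 5·√(d·T·ln T). -/
/-!
Write `M_k = I + ∑_{i<k} v_i v_iᵀ` and `q_k = v_kᵀ M_k⁻¹ v_k`. The matrix determinant lemma gives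
`det M_{k+1} = det M_k (1 + q_k)`, so `∑ log (1 + q_k) = log det M_T`. Since `M_k ≥ I`,
`q_k ≤ ‖v_k‖² ≤ 1`, and on `[0, 1]` we have `q ≤ 2 log (1 + q)`; hence `∑ q_k ≤ 2 log det M_T`.
Every Rayleigh quotient of `M_T` is at most `1 + T`, so `det M_T ≤ (1 + T)^d`, and Cauchy–Schwarz
turns `∑ q_k ≤ 2 d log (1 + T) ≤ 4 d log T` into the bound on `∑ √q_k`.
-/

open Matrix Finset

theorem Finset.sum_Icc_one_eq_sum_range {M : Type*} [AddCommMonoid M] (f : ℕ → M) (k : ℕ) :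
    ∑ t ∈ Icc 1 k, f t = ∑ i ∈ range k, f (i + 1) := by
  rw [← Ico_add_one_right_eq_Icc, range_eq_Ico, sum_Ico_add']

theorem Real.le_two_mul_log_one_add {x : ℝ} (h0 : 0 ≤ x) (h2 : x ≤ 2) :
    x ≤ 2 * Real.log (1 + x) := by
  have h := Real.le_log_one_add_of_nonneg h0
  rw [div_le_iff₀ (by linarith)] at h
  nlinarith

namespace Matrix

variable {n : Type*} [Fintype n]

theorem dotProduct_self_nonneg (v : n → ℝ) : 0 ≤ v ⬝ᵥ v :=
  sum_nonneg fun i _ => mul_self_nonneg (v i)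

theorem sq_dotProduct_le (u v : n → ℝ) : (u ⬝ᵥ v) ^ 2 ≤ (u ⬝ᵥ u) * (v ⬝ᵥ v) := by
  simpa only [dotProduct, ← sq] using sum_mul_sq_le_sq_mul_sq univ u v

theorem dotProduct_vecMulVec_self_mulVec (u x : n → ℝ) :
    x ⬝ᵥ vecMulVec u u *ᵥ x = (u ⬝ᵥ x) ^ 2 := by
  simp [vecMulVec_mulVec, sq, dotProduct_comm]

variable [DecidableEq n]

theorem dotProduct_inv_mulVec_le_dotProduct_self {A : Matrix n n ℝ}
    (hA : IsUnit A.det) (h : ∀ y, y ⬝ᵥ y ≤ y ⬝ᵥ A *ᵥ y) (u : n → ℝ) :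
    u ⬝ᵥ A⁻¹ *ᵥ u ≤ u ⬝ᵥ u := by
  set y := A⁻¹ *ᵥ u
  have hAy : A *ᵥ y = u := by rw [mulVec_mulVec, mul_nonsing_inv _ hA, one_mulVec]
  -- `y ⬝ᵥ y ≤ y ⬝ᵥ A y = u ⬝ᵥ y`, so Cauchy–Schwarz gives `(u ⬝ᵥ y)² ≤ (u ⬝ᵥ u) (u ⬝ᵥ y)`.
  have hyy : y ⬝ᵥ y ≤ u ⬝ᵥ y := by simpa [hAy, dotProduct_comm y u] using h y
  nlinarith [sq_dotProduct_le u y, dotProduct_self_nonneg u, dotProduct_self_nonneg y]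

theorem IsHermitian.eigenvalues_le {A : Matrix n n ℝ} (hA : A.IsHermitian) {c : ℝ}
    (h : ∀ x, x ⬝ᵥ A *ᵥ x ≤ c * (x ⬝ᵥ x)) (i : n) : hA.eigenvalues i ≤ c := by
  have he : inner ℝ (hA.eigenvectorBasis i) (hA.eigenvectorBasis i) = 1 := by
    rw [real_inner_self_eq_norm_sq, hA.eigenvectorBasis.orthonormal.1 i, one_pow]
  rw [EuclideanSpace.inner_eq_star_dotProduct, star_trivial] at he
  simpa [hA.eigenvalues_eq i, he] using h (hA.eigenvectorBasis i)

theorem PosSemidef.det_le_pow {A : Matrix n n ℝ} (hA : A.PosSemidef) {c : ℝ}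
    (h : ∀ x, x ⬝ᵥ A *ᵥ x ≤ c * (x ⬝ᵥ x)) : A.det ≤ c ^ Fintype.card n := by
  rw [hA.isHermitian.det_eq_prod_eigenvalues]
  calc ∏ i, (hA.isHermitian.eigenvalues i : ℝ) ≤ ∏ _i : n, c :=
        prod_le_prod (fun i _ => hA.eigenvalues_nonneg i) fun i _ =>
          hA.isHermitian.eigenvalues_le h i
    _ = c ^ Fintype.card n := by simp

end Matrix

section EllipticalPotential

variable {n : Type*} [Fintype n] [DecidableEq n]

noncomputable def regularizedGram (v : ℕ → n → ℝ) (k : ℕ) : Matrix n n ℝ :=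
  1 + ∑ i ∈ range k, vecMulVec (v i) (v i)

noncomputable def ellipticalPotential (v : ℕ → n → ℝ) (k : ℕ) : ℝ :=
  v k ⬝ᵥ (regularizedGram v k)⁻¹ *ᵥ v k

variable (v : ℕ → n → ℝ)

theorem regularizedGram_posDef (k : ℕ) : (regularizedGram v k).PosDef :=
  PosDef.one.add_posSemidef <| posSemidef_sum _ fun i _ => by
    simpa using posSemidef_vecMulVec_self_star (v i)

theorem isUnit_det_regularizedGram (k : ℕ) : IsUnit (regularizedGram v k).det :=
  (regularizedGram_posDef v k).det_pos.ne'.isUnit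

theorem dotProduct_regularizedGram_mulVec (k : ℕ) (x : n → ℝ) :
    x ⬝ᵥ regularizedGram v k *ᵥ x = x ⬝ᵥ x + ∑ i ∈ range k, (v i ⬝ᵥ x) ^ 2 := by
  simp [regularizedGram, add_mulVec, sum_mulVec, dotProduct_sum,
    dotProduct_vecMulVec_self_mulVec]

theorem det_regularizedGram_succ (k : ℕ) :
    (regularizedGram v (k + 1)).det =
      (regularizedGram v k).det * (1 + ellipticalPotential v k) := by
  rw [regularizedGram, sum_range_succ, ← add_assoc, ← regularizedGram, vecMulVec_eq Unit,
    det_add_replicateCol_mul_replicateRow (isUnit_det_regularizedGram v k), Matrix.mul_assoc,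
    ← replicateCol_mulVec, det_unique (n := Unit)]
  simp [replicateRow_mul_replicateCol_apply, ellipticalPotential]

theorem det_regularizedGram (k : ℕ) :
    (regularizedGram v k).det = ∏ i ∈ range k, (1 + ellipticalPotential v i) := by
  induction k with
  | zero => simp [regularizedGram]
  | succ k ih => rw [det_regularizedGram_succ, ih, prod_range_succ]

theorem ellipticalPotential_nonneg (k : ℕ) : 0 ≤ ellipticalPotential v k := by
  simpa [ellipticalPotential] using
    (regularizedGram_posDef v k).inv.posSemidef.dotProduct_mulVec_nonneg (v k)

variable {v}

theorem ellipticalPotential_le_one (hv : ∀ i, v i ⬝ᵥ v i ≤ 1) (k : ℕ) :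
    ellipticalPotential v k ≤ 1 := by
  have h_one_le : ∀ y, y ⬝ᵥ y ≤ y ⬝ᵥ regularizedGram v k *ᵥ y := fun y => by
    rw [dotProduct_regularizedGram_mulVec]
    exact le_add_of_nonneg_right (sum_nonneg fun i _ => sq_nonneg _)
  exact (dotProduct_inv_mulVec_le_dotProduct_self (isUnit_det_regularizedGram v k) h_one_le
    (v k)).trans (hv k)

theorem det_regularizedGram_le (hv : ∀ i, v i ⬝ᵥ v i ≤ 1) (k : ℕ) :
    (regularizedGram v k).det ≤ (1 + k) ^ Fintype.card n := by
  refine (regularizedGram_posDef v k).posSemidef.det_le_pow fun x => ?_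
  have hsum : ∑ i ∈ range k, (v i ⬝ᵥ x) ^ 2 ≤ k * (x ⬝ᵥ x) :=
    calc ∑ i ∈ range k, (v i ⬝ᵥ x) ^ 2 ≤ ∑ _i ∈ range k, x ⬝ᵥ x :=
          sum_le_sum fun i _ => (sq_dotProduct_le (v i) x).trans <|
            mul_le_of_le_one_left (dotProduct_self_nonneg x) (hv i)
      _ = k * (x ⬝ᵥ x) := by simp
  rw [dotProduct_regularizedGram_mulVec]
  linarith

theorem sum_ellipticalPotential_le (hv : ∀ i, v i ⬝ᵥ v i ≤ 1) (k : ℕ) :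
    ∑ i ∈ range k, ellipticalPotential v i ≤ 2 * Fintype.card n * Real.log (1 + k) :=
  calc ∑ i ∈ range k, ellipticalPotential v i
      ≤ 2 * ∑ i ∈ range k, Real.log (1 + ellipticalPotential v i) := by
        rw [mul_sum]
        exact sum_le_sum fun i _ => Real.le_two_mul_log_one_add (ellipticalPotential_nonneg v i)
          ((ellipticalPotential_le_one hv i).trans one_le_two)
    _ = 2 * Real.log (regularizedGram v k).det := by
        rw [det_regularizedGram, Real.log_prod fun i _ => by
          linarith [ellipticalPotential_nonneg v i]]
    _ ≤ 2 * Real.log ((1 + k) ^ Fintype.card n) := by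
        gcongr
        · exact (regularizedGram_posDef v k).det_pos
        · exact det_regularizedGram_le hv k
    _ = 2 * Fintype.card n * Real.log (1 + k) := by rw [Real.log_pow]; ring

theorem sum_sqrt_ellipticalPotential_le (hv : ∀ i, v i ⬝ᵥ v i ≤ 1) (k : ℕ) :
    ∑ i ∈ range k, √(ellipticalPotential v i) ≤ √(2 * k * Fintype.card n * Real.log (1 + k)) :=
  calc ∑ i ∈ range k, √(ellipticalPotential v i)
      = ∑ i ∈ range k, √1 * √(ellipticalPotential v i) := by simp
    _ ≤ √(∑ _i ∈ range k, 1) * √(∑ i ∈ range k, ellipticalPotential v i) :=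
        Real.sum_sqrt_mul_sqrt_le _ (fun _ => zero_le_one) (ellipticalPotential_nonneg v)
    _ ≤ √k * √(2 * Fintype.card n * Real.log (1 + k)) := by
        simp only [sum_const, card_range, nsmul_eq_mul, mul_one]
        gcongr
        exact sum_ellipticalPotential_le hv k
    _ = √(2 * k * Fintype.card n * Real.log (1 + k)) := by
        rw [← Real.sqrt_mul (Nat.cast_nonneg k)]; ring_nf

end EllipticalPotential

theorem sum_sqrt_quadratic_inverse_le_general (d T : ℕ) (hT : 2 ≤ T)
    (b : ℕ → (Fin d → ℝ)) (hb : ∀ t, Real.sqrt (b t ⬝ᵥ b t) ≤ 1) :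
    ∑ t ∈ Finset.Icc 1 T,
        Real.sqrt ((b t) ⬝ᵥ
          ((((1 : Matrix (Fin d) (Fin d) ℝ)
              + ∑ τ ∈ Finset.Icc 1 (t - 1), vecMulVec (b τ) (b τ))⁻¹).mulVec (b t)))
      ≤ 5 * Real.sqrt ((d : ℝ) * T * Real.log T) := by
  have hT' : (2 : ℝ) ≤ T := by exact_mod_cast hT
  have hlog : Real.log (1 + T) ≤ 2 * Real.log T :=
    calc Real.log (1 + T) ≤ Real.log ((T : ℝ) ^ 2) := Real.log_le_log (by positivity) (by nlinarith)
      _ = 2 * Real.log T := by rw [Real.log_pow]; norm_num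
  have hpot := sum_sqrt_ellipticalPotential_le (v := fun i => b (i + 1))
    (fun i => Real.sqrt_le_one.1 (hb _)) T
  simp only [Finset.sum_Icc_one_eq_sum_range, Nat.add_sub_cancel]
  refine hpot.trans ?_
  rw [show (5 : ℝ) = √25 by rw [show (25 : ℝ) = 5 ^ 2 by norm_num, Real.sqrt_sq (by norm_num)],
    ← Real.sqrt_mul (by norm_num), Fintype.card_fin]
  apply Real.sqrt_le_sqrt
  have hdT : (0 : ℝ) ≤ d * T := by positivity
  nlinarith [Real.log_nonneg (by linarith : (1 : ℝ) ≤ T), mul_le_mul_of_nonneg_left hlog hdT]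

/-- Elliptical-potential bound: for vectors `b 1, …, b T ∈ ℝ^d` of Euclidean norm at most 1
and `M t = I_d + ∑_{τ=1}^{t−1} b_τ b_τᵀ`,
`∑_{t=1}^{T} √(b_tᵀ M_t⁻¹ b_t) ≤ 5·√(d·T·ln T)`. -/
theorem sum_sqrt_quadratic_inverse_le (d T : ℕ) (hd : 1 ≤ d) (hT : 2 ≤ T)
    (b : ℕ → (Fin d → ℝ)) (hb : ∀ t, Real.sqrt (b t ⬝ᵥ b t) ≤ 1) :
    ∑ t ∈ Finset.Icc 1 T,
        Real.sqrt ((b t) ⬝ᵥ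
          ((((1 : Matrix (Fin d) (Fin d) ℝ)
              + ∑ τ ∈ Finset.Icc 1 (t - 1), vecMulVec (b τ) (b τ))⁻¹).mulVec (b t)))
      ≤ 5 * Real.sqrt ((d : ℝ) * T * Real.log T) :=
  sum_sqrt_quadratic_inverse_le_general d T hT b hb
end
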